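/- arXiv:1906.08965 — 4 statements merged into one kernel-verified Lean document; each statement's English description precedes it below -/
import Mathlib

section
/- The series Θ_ρ := Σ_{j∈ℤ} 2^{−j} ln θ_{j−1,ρ} converges absolutely. For every A ∈ ℝ, the sequence (α_n(A,ρ))_{n∈ℤ} is positive, satisfies the recurrence α_{n+1}(A,ρ) = θ_{n,ρ}·α_n(A,ρ)² for all n ∈ ℤ, and satisfies the asymptotics α_n(A,ρ) = 1 + (−A − Θ_ρ)·2^n + o(2^n) as n → −∞. Conversely, every positive sequence (α_n)_{n∈ℤ} satisfying α_{n+1} = θ_{n,ρ}·α_n² for all n ∈ ℤ equals (α_n(A,ρ))_{n∈ℤ} for a unique A ∈ ℝ. -/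
open Filter Topology Asymptotics MeasureTheory

noncomputable section

/-- `ζ_{n,ρ} = ln 2 · k(2^{n+ρ}) / (2^{n+ρ} · γ(2^{n+ρ+1}))`. -/
def zeta (k γ : ℝ → ℝ) (ρ : ℝ) (n : ℤ) : ℝ :=
  Real.log 2 * k ((2:ℝ) ^ ((n:ℝ) + ρ)) / ((2:ℝ) ^ ((n:ℝ) + ρ) * γ ((2:ℝ) ^ ((n:ℝ) + ρ + 1)))

/-- `θ_{n,ρ} = 2 ζ_{n+1,ρ} / ζ_{n,ρ}`. -/
def thetaF (k γ : ℝ → ℝ) (ρ : ℝ) (n : ℤ) : ℝ :=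
  2 * zeta k γ ρ (n + 1) / zeta k γ ρ n

/-- `α_n(A,ρ) = exp(−A·2^n)·exp(−2^n·Σ_{j=n+1}^∞ 2^{−j} ln θ_{j−1,ρ})`
(the tail series is re-indexed by `j = n + 1 + m`, `m ∈ ℕ`). -/
def alphaF (k γ : ℝ → ℝ) (ρ A : ℝ) (n : ℤ) : ℝ :=
  Real.exp (-(A * (2:ℝ) ^ n)) *
    Real.exp (-((2:ℝ) ^ n *
      ∑' m : ℕ, (2:ℝ) ^ (-(n + 1 + (m:ℤ))) * Real.log (thetaF k γ ρ (n + (m:ℤ)))))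

/-- `a_n(A,ρ) = 2 ζ_{n,ρ}⁻¹ α_n(A,ρ)`. -/
def aF (k γ : ℝ → ℝ) (ρ A : ℝ) (n : ℤ) : ℝ := 2 * (zeta k γ ρ n)⁻¹ * alphaF k γ ρ A n


/-!
Writing `X = 2^{n+ρ}`, `θ_{n,ρ} = (k(2X)/k(X))·(γ(2X)/γ(4X))`. As `n → ∞` this tends to
`2^{α+1}·2^β/4^β > 0`, so `ln θ_{n,ρ}` is bounded and the terms with `j ≥ 0` of `Θ_ρ` decay like
`2^{-j}`; as `n → -∞` the Hölder behaviour of `k, γ` at `0` gives `ln θ_{n,ρ} = O(X^c)` with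
`c = min(ᾱ, β̄) > 1`, so the terms with `j < 0` decay like `2^{(c-1)j}`.

With `T_n = Σ_{j>n} 2^{-j} ln θ_{j-1,ρ}` we have `α_n(A,ρ) = exp(-(A + T_n)·2^n)`, and
`T_n = 2^{-(n+1)} ln θ_{n,ρ} + T_{n+1}` is the recurrence after taking logarithms. Since
`T_n → Θ_ρ` as `n → -∞`, expanding `exp` to first order gives the asymptotics. A positive solution
of the recurrence is determined by its value at `n = 0` (positivity selects the square root going
backwards), and `A ↦ α_0(A,ρ)` is a bijection onto `(0,∞)`.
-/

section IntSeries

variable {E : Type*} [NormedAddCommGroup E]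

theorem summable_int_of_isBigO_zpow [CompleteSpace E] {f : ℤ → E} {a b : ℝ} (ha₀ : 0 ≤ a)
    (ha : a < 1) (hb : 1 < b) (htop : f =O[atTop] (a ^ ·)) (hbot : f =O[atBot] (b ^ ·)) :
    Summable f := by
  refine Summable.of_nat_of_neg ?_ ?_
  · refine summable_of_isBigO_nat (summable_geometric_of_lt_one ha₀ ha) ?_
    simpa [Function.comp_def] using htop.comp_tendsto tendsto_natCast_atTop_atTop
  · refine summable_of_isBigO_nat (summable_geometric_of_lt_one (by positivity)
      (inv_lt_one_of_one_lt₀ hb)) ?_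
    simpa [Function.comp_def] using
      hbot.comp_tendsto (tendsto_neg_atTop_atBot.comp tendsto_natCast_atTop_atTop)

theorem tsum_int_eq_tsum_nat_add_add_tsum_nat_sub [CompleteSpace E] {f : ℤ → E}
    (hf : Summable f) (n : ℤ) :
    ∑' j, f j = ∑' m : ℕ, f (n + 1 + m) + ∑' m : ℕ, f (n - m) := by
  have hnat : Summable fun m : ℕ => f (n + 1 + m) :=
    hf.comp_injective (i := fun m : ℕ => n + 1 + m) fun a b h => by simpa using h
  have hneg : Summable fun m : ℕ => f (n - m) :=
    hf.comp_injective (i := fun m : ℕ => n - m) fun a b h => by simpa using h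
  have hidx : ∀ m : ℕ, n + 1 + -((m : ℤ) + 1) = n - m := fun m => by ring
  have hsplit := tsum_of_nat_of_neg_add_one (f := fun j => f (n + 1 + j)) hnat
    (by simpa only [hidx] using hneg)
  simp only [hidx] at hsplit
  rw [← hsplit]
  exact ((Equiv.addLeft (n + 1)).tsum_eq f).symm

theorem tendsto_tsum_nat_sub_atBot (f : ℤ → E) :
    Tendsto (fun n : ℤ => ∑' m : ℕ, f (n - m)) atBot (𝓝 0) := by
  have htoNat : Tendsto (fun n : ℤ => (-n).toNat) atBot atTop :=
    tendsto_atTop.2 fun N => eventually_atBot.2 ⟨-N, fun n hn => by omega⟩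
  refine ((tendsto_sum_nat_add fun m : ℕ => f (-m)).comp htoNat).congr' ?_
  filter_upwards [eventually_le_atBot 0] with n hn
  refine tsum_congr fun m => congrArg f ?_
  simp only
  omega

theorem tendsto_tsum_nat_add_atBot [CompleteSpace E] {f : ℤ → E} (hf : Summable f) :
    Tendsto (fun n : ℤ => ∑' m : ℕ, f (n + 1 + m)) atBot (𝓝 (∑' j, f j)) := by
  simpa using ((tendsto_tsum_nat_sub_atBot f).const_sub (∑' j, f j)).congr fun n =>
    sub_eq_of_eq_add (tsum_int_eq_tsum_nat_add_add_tsum_nat_sub hf n)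

theorem tsum_nat_add_one_add_eq [CompleteSpace E] {f : ℤ → E} (hf : Summable f) (n : ℤ) :
    ∑' m : ℕ, f (n + 1 + m) = f (n + 1) + ∑' m : ℕ, f (n + 1 + 1 + m) := by
  have hnat : Summable fun m : ℕ => f (n + 1 + m) :=
    hf.comp_injective (i := fun m : ℕ => n + 1 + m) fun a b h => by simpa using h
  rw [hnat.tsum_eq_zero_add]
  push_cast
  simp only [add_zero, add_assoc, add_comm (1 : ℤ)]

end IntSeries

theorem isLittleO_exp_neg_mul_two_zpow {T : ℤ → ℝ} {Θ : ℝ} (hT : Tendsto T atBot (𝓝 Θ))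
    (A : ℝ) :
    (fun n : ℤ => Real.exp (-(A + T n) * 2 ^ n) - (1 + (-A - Θ) * 2 ^ n)) =o[atBot]
      fun n => (2:ℝ) ^ n := by
  have htwo : Tendsto (fun n : ℤ => (2:ℝ) ^ n) atBot (𝓝 0) := by
    simpa only [Function.comp_def, id, Real.rpow_intCast] using
      (tendsto_rpow_atBot_of_base_gt_one 2 one_lt_two).comp (tendsto_intCast_atBot_iff.2 tendsto_id)
  have hcoef : Tendsto (fun n => -(A + T n)) atBot (𝓝 (-(A + Θ))) := (hT.const_add A).neg
  have hv : (fun n => -(A + T n) * 2 ^ n) =O[atBot] fun n : ℤ => (2:ℝ) ^ n := by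
    simpa using (hcoef.isBigO_one ℝ).mul (isBigO_refl (fun n : ℤ => (2:ℝ) ^ n) atBot)
  have hv0 : Tendsto (fun n => -(A + T n) * 2 ^ n) atBot (𝓝 0) := by
    simpa using hcoef.mul htwo
  have hexp : (fun x => Real.exp x - 1 - x) =o[𝓝 0] fun x => x := by
    simpa using hasDerivAt_iff_isLittleO.1 (Real.hasDerivAt_exp 0)
  have hlin : (fun n => (Θ - T n) * 2 ^ n) =o[atBot] fun n : ℤ => (2:ℝ) ^ n := by
    have hdiff : Tendsto (fun n => Θ - T n) atBot (𝓝 0) := by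
      simpa using hT.const_sub Θ
    simpa using
      ((isLittleO_one_iff ℝ).2 hdiff).mul_isBigO (isBigO_refl (fun n : ℤ => (2:ℝ) ^ n) atBot)
  refine (((hexp.comp_tendsto hv0).trans_isBigO hv).add hlin).congr_left fun n => ?_
  simp only [Function.comp_apply]
  ring

theorem eq_of_forall_succ_eq_mul_sq {θ u v : ℤ → ℝ} (hu : ∀ n, 0 < u n) (hv : ∀ n, 0 < v n)
    (hu' : ∀ n, u (n + 1) = θ n * u n ^ 2) (hv' : ∀ n, v (n + 1) = θ n * v n ^ 2)
    (h₀ : u 0 = v 0) : u = v := by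
  funext n
  induction n using Int.induction_on with
  | zero => exact h₀
  | succ i ih => rw [hu', hv', ih]
  | pred i ih =>
    have hθ : θ (-i - 1) ≠ 0 := by
      have := hu (-i - 1 + 1)
      rw [hu'] at this
      exact left_ne_zero_of_mul this.ne'
    have hsq : u (-i - 1) ^ 2 = v (-i - 1) ^ 2 := by
      refine mul_left_cancel₀ hθ ?_
      rw [← hu', ← hv', sub_add_cancel, ih]
    exact (pow_left_inj₀ (hu _).le (hv _).le two_ne_zero).1 hsq

theorem tendsto_const_mul_nhdsGT_zero {c : ℝ} (hc : 0 < c) :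
    Tendsto (c * ·) (𝓝[>] (0:ℝ)) (𝓝[>] 0) :=
  tendsto_iff_comap.2 (comap_mulLeft_nhdsGT_zero hc).ge

theorem isBigO_rpow_rpow_nhdsGT_zero {a b : ℝ} (hba : b ≤ a) :
    (fun x : ℝ => x ^ a) =O[𝓝[>] 0] fun x => x ^ b := by
  refine IsBigO.of_bound 1 ?_
  filter_upwards [Ioo_mem_nhdsGT one_pos] with x ⟨hx₀, hx₁⟩
  rw [one_mul, Real.norm_of_nonneg (by positivity), Real.norm_of_nonneg (by positivity)]
  exact Real.rpow_le_rpow_of_exponent_ge hx₀ hx₁.le hba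

theorem tendsto_comp_mul_div_comp_mul_atTop {F : ℝ → ℝ} {p a b : ℝ} (ha : 0 < a) (hb : 0 < b)
    (hF : Tendsto (fun ξ => F ξ / ξ ^ p) atTop (𝓝 1)) :
    Tendsto (fun ξ => F (a * ξ) / F (b * ξ)) atTop (𝓝 (a ^ p / b ^ p)) := by
  have hscale : ∀ c, 0 < c → Tendsto (fun ξ => F (c * ξ) / (c * ξ) ^ p) atTop (𝓝 1) :=
    fun c hc => hF.comp (tendsto_id.const_mul_atTop hc)
  have hlim := ((hscale a ha).div (hscale b hb) one_ne_zero).mul_const (a ^ p / b ^ p)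
  rw [div_one, one_mul] at hlim
  refine hlim.congr' ?_
  filter_upwards [eventually_gt_atTop 0] with ξ hξ
  have hξp : 0 < ξ ^ p := by positivity
  have hap : 0 < a ^ p := by positivity
  have hbp : 0 < b ^ p := by positivity
  simp only [Pi.div_apply, Real.mul_rpow ha.le hξ.le, Real.mul_rpow hb.le hξ.le]
  field_simp

section NearZero

variable {F : ℝ → ℝ} {F₀ e : ℝ}

theorem tendsto_nhdsGT_zero_of_isBigO_rpow (he : 0 < e)
    (hF : (fun ξ => F ξ - F₀) =O[𝓝[>] 0] (· ^ e)) : Tendsto F (𝓝[>] 0) (𝓝 F₀) := by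
  have hpow : Tendsto (· ^ e) (𝓝[>] (0:ℝ)) (𝓝 0) := by
    simpa [Real.zero_rpow he.ne'] using
      (Real.continuousAt_rpow_const 0 e (Or.inr he.le)).tendsto.mono_left nhdsWithin_le_nhds
  exact tendsto_sub_nhds_zero_iff.1 (hF.trans_tendsto hpow)

theorem isBigO_log_comp_mul_sub_log (hF₀ : F₀ ≠ 0) (he : 0 < e)
    (hF : (fun ξ => F ξ - F₀) =O[𝓝[>] 0] (· ^ e)) {c : ℝ} (hc : 0 < c) :
    (fun ξ => Real.log (F (c * ξ)) - Real.log F₀) =O[𝓝[>] 0] (· ^ e) := by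
  have hlog := ((Real.hasDerivAt_log hF₀).isBigO_sub.comp_tendsto
    (tendsto_nhdsGT_zero_of_isBigO_rpow he hF)).trans hF
  refine (hlog.comp_tendsto (tendsto_const_mul_nhdsGT_zero hc)).trans ?_
  refine (isBigO_const_mul_self (c ^ e) (· ^ e) _).congr' ?_ EventuallyEq.rfl
  filter_upwards [self_mem_nhdsWithin] with ξ hξ
  exact (Real.mul_rpow hc.le (le_of_lt hξ)).symm

theorem isBigO_log_comp_mul_div_comp_mul (hF₀ : F₀ ≠ 0) (he : 0 < e)
    (hF : (fun ξ => F ξ - F₀) =O[𝓝[>] 0] (· ^ e)) {a b : ℝ} (ha : 0 < a) (hb : 0 < b) :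
    (fun ξ => Real.log (F (a * ξ) / F (b * ξ))) =O[𝓝[>] 0] (· ^ e) := by
  have hne : ∀ c, 0 < c → ∀ᶠ ξ in 𝓝[>] 0, F (c * ξ) ≠ 0 := fun c hc =>
    ((tendsto_nhdsGT_zero_of_isBigO_rpow he hF).comp
      (tendsto_const_mul_nhdsGT_zero hc)).eventually_ne hF₀
  refine ((isBigO_log_comp_mul_sub_log hF₀ he hF ha).sub
    (isBigO_log_comp_mul_sub_log hF₀ he hF hb)).congr' ?_ EventuallyEq.rfl
  filter_upwards [hne a ha, hne b hb] with ξ hFa hFb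
  rw [Real.log_div hFa hFb]
  ring

end NearZero

def thetaSummand (k γ : ℝ → ℝ) (ρ : ℝ) (j : ℤ) : ℝ :=
  (2:ℝ) ^ (-j) * Real.log (thetaF k γ ρ (j - 1))

section Theta

variable {k γ : ℝ → ℝ} {ρ : ℝ}

theorem thetaF_eq_comp :
    thetaF k γ ρ = (fun ξ => k (2 * ξ) / k ξ * (γ (2 * ξ) / γ (4 * ξ))) ∘
      fun n : ℤ => (2:ℝ) ^ ((n:ℝ) + ρ) := by
  funext n
  have hX : (2:ℝ) ^ ((n:ℝ) + ρ) ≠ 0 := (Real.rpow_pos_of_pos two_pos _).ne'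
  have hlog : Real.log 2 ≠ 0 := (Real.log_pos one_lt_two).ne'
  have hpow_succ : (2:ℝ) ^ (((n + 1 : ℤ) : ℝ) + ρ) = 2 * 2 ^ ((n:ℝ) + ρ) := by
    rw [Int.cast_add, Int.cast_one, add_right_comm, Real.rpow_add_one two_ne_zero, mul_comm]
  have hpow_succ_add_one : (2:ℝ) ^ (((n + 1 : ℤ) : ℝ) + ρ + 1) = 4 * 2 ^ ((n:ℝ) + ρ) := by
    rw [Real.rpow_add_one two_ne_zero, hpow_succ]; ring
  have hpow_add_one : (2:ℝ) ^ ((n:ℝ) + ρ + 1) = 2 * 2 ^ ((n:ℝ) + ρ) := by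
    rw [Real.rpow_add_one two_ne_zero, mul_comm]
  simp only [thetaF, zeta, Function.comp_apply, hpow_succ, hpow_succ_add_one, hpow_add_one]
  field_simp

theorem thetaF_pos (hk_pos : ∀ ξ : ℝ, 0 ≤ ξ → 0 < k ξ) (hγ_pos : ∀ ξ : ℝ, 0 < ξ → 0 < γ ξ)
    (n : ℤ) : 0 < thetaF k γ ρ n := by
  have hX : (0:ℝ) < 2 ^ ((n:ℝ) + ρ) := Real.rpow_pos_of_pos two_pos _
  rw [thetaF_eq_comp, Function.comp_apply]
  exact mul_pos (div_pos (hk_pos _ (by positivity)) (hk_pos _ hX.le))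
    (div_pos (hγ_pos _ (by positivity)) (hγ_pos _ (by positivity)))

theorem tendsto_thetaF_atTop {p q : ℝ} (hk_inf : Tendsto (fun ξ => k ξ / ξ ^ p) atTop (𝓝 1))
    (hγ_inf : Tendsto (fun ξ => γ ξ / ξ ^ q) atTop (𝓝 1)) :
    Tendsto (thetaF k γ ρ) atTop (𝓝 (2 ^ p * (2 ^ q / 4 ^ q))) := by
  have hX : Tendsto (fun n : ℤ => (2:ℝ) ^ ((n:ℝ) + ρ)) atTop atTop :=
    (tendsto_rpow_atTop_of_base_gt_one 2 one_lt_two).comp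
      (tendsto_atTop_add_const_right _ ρ tendsto_intCast_atTop_atTop)
  have hk := tendsto_comp_mul_div_comp_mul_atTop two_pos one_pos hk_inf
  have hγ := tendsto_comp_mul_div_comp_mul_atTop two_pos four_pos hγ_inf
  rw [Real.one_rpow, div_one] at hk
  simp only [one_mul] at hk
  rw [thetaF_eq_comp]
  exact (hk.mul hγ).comp hX

theorem isBigO_log_thetaF_atBot {k₀ γ₀ a b : ℝ} (hk_pos : ∀ ξ : ℝ, 0 ≤ ξ → 0 < k ξ)
    (hγ_pos : ∀ ξ : ℝ, 0 < ξ → 0 < γ ξ) (hk₀ : k₀ ≠ 0) (hγ₀ : γ₀ ≠ 0) (ha : 0 < a) (hb : 0 < b)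
    (hk_0 : (fun ξ => k ξ - k₀) =O[𝓝[>] 0] (· ^ a))
    (hγ_0 : (fun ξ => γ ξ - γ₀) =O[𝓝[>] 0] (· ^ b)) :
    (fun n => Real.log (thetaF k γ ρ n)) =O[atBot]
      fun n : ℤ => ((2:ℝ) ^ ((n:ℝ) + ρ)) ^ min a b := by
  have hX : Tendsto (fun n : ℤ => (2:ℝ) ^ ((n:ℝ) + ρ)) atBot (𝓝[>] 0) :=
    tendsto_nhdsWithin_iff.2 ⟨(tendsto_rpow_atBot_of_base_gt_one 2 one_lt_two).comp
      (tendsto_atBot_add_const_right _ ρ (tendsto_intCast_atBot_iff.2 tendsto_id)),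
      Eventually.of_forall fun n => Real.rpow_pos_of_pos two_pos _⟩
  have hk := (isBigO_log_comp_mul_div_comp_mul hk₀ ha hk_0 two_pos one_pos).trans
    (isBigO_rpow_rpow_nhdsGT_zero (min_le_left a b))
  have hγ := (isBigO_log_comp_mul_div_comp_mul hγ₀ hb hγ_0 two_pos four_pos).trans
    (isBigO_rpow_rpow_nhdsGT_zero (min_le_right a b))
  refine ((hk.add hγ).comp_tendsto hX).congr' (Eventually.of_forall fun n => ?_) EventuallyEq.rfl
  have hX0 : (0:ℝ) < 2 ^ ((n:ℝ) + ρ) := Real.rpow_pos_of_pos two_pos _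
  rw [thetaF_eq_comp]
  simp only [Function.comp_apply, one_mul]
  rw [Real.log_mul (div_pos (hk_pos _ (by positivity)) (hk_pos _ hX0.le)).ne'
    (div_pos (hγ_pos _ (by positivity)) (hγ_pos _ (by positivity))).ne']

theorem summable_thetaSummand {p q k₀ γ₀ a b : ℝ} (hk_pos : ∀ ξ : ℝ, 0 ≤ ξ → 0 < k ξ)
    (hγ_pos : ∀ ξ : ℝ, 0 < ξ → 0 < γ ξ)
    (hk_inf : Tendsto (fun ξ => k ξ / ξ ^ p) atTop (𝓝 1))
    (hγ_inf : Tendsto (fun ξ => γ ξ / ξ ^ q) atTop (𝓝 1))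
    (hk₀ : k₀ ≠ 0) (hγ₀ : γ₀ ≠ 0) (ha : 1 < a) (hb : 1 < b)
    (hk_0 : (fun ξ => k ξ - k₀) =O[𝓝[>] 0] (· ^ a))
    (hγ_0 : (fun ξ => γ ξ - γ₀) =O[𝓝[>] 0] (· ^ b)) :
    Summable (thetaSummand k γ ρ) := by
  unfold thetaSummand
  set c := min a b
  have hc : 1 < c := lt_min ha hb
  refine summable_int_of_isBigO_zpow (a := 2⁻¹) (b := 2 ^ (c - 1)) (by norm_num) (by norm_num)
    (Real.one_lt_rpow one_lt_two (by linarith)) ?_ ?_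
  · have hL : (0:ℝ) < 2 ^ p * (2 ^ q / 4 ^ q) := by positivity
    have hlog := ((Real.continuousAt_log hL.ne').tendsto.comp
      (tendsto_thetaF_atTop (ρ := ρ) hk_inf hγ_inf)).isBigO_one ℝ
    have hterm := (isBigO_refl (fun j : ℤ => (2:ℝ) ^ (-j)) atTop).mul
      (hlog.comp_tendsto (tendsto_atTop_add_const_right _ (-1) tendsto_id))
    simpa [Function.comp_def, ← sub_eq_add_neg, zpow_neg, inv_zpow] using hterm
  · have hlog := (isBigO_log_thetaF_atBot (ρ := ρ) hk_pos hγ_pos hk₀ hγ₀ (by linarith)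
      (by linarith) hk_0 hγ_0).comp_tendsto (tendsto_atBot_add_const_right _ (-1) tendsto_id)
    have hpow : ∀ j : ℤ, (2:ℝ) ^ (-j) * ((2:ℝ) ^ (((j + -1 : ℤ) : ℝ) + ρ)) ^ c =
        2 ^ ((ρ - 1) * c) * (2 ^ (c - 1)) ^ j := by
      intro j
      rw [← Real.rpow_intCast, ← Real.rpow_intCast, ← Real.rpow_mul zero_le_two,
        ← Real.rpow_mul zero_le_two, ← Real.rpow_add two_pos, ← Real.rpow_add two_pos]
      congr 1
      push_cast
      ring
    exact (((isBigO_refl (fun j : ℤ => (2:ℝ) ^ (-j)) atBot).mul hlog).congr_right hpow).trans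
      (isBigO_const_mul_self _ _ _)

theorem alphaF_eq (A : ℝ) (n : ℤ) :
    alphaF k γ ρ A n = Real.exp (-(A + ∑' m : ℕ, thetaSummand k γ ρ (n + 1 + m)) * 2 ^ n) := by
  have hshift : ∀ m : ℕ, n + (m : ℤ) = n + 1 + m - 1 := fun m => by ring
  simp only [alphaF, thetaSummand, ← hshift, ← Real.exp_add]
  ring_nf

theorem alphaF_pos (A : ℝ) (n : ℤ) : 0 < alphaF k γ ρ A n := by
  rw [alphaF_eq]
  exact Real.exp_pos _

theorem alphaF_succ (hθ : ∀ n, 0 < thetaF k γ ρ n) (hsum : Summable (thetaSummand k γ ρ))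
    (A : ℝ) (n : ℤ) : alphaF k γ ρ A (n + 1) = thetaF k γ ρ n * alphaF k γ ρ A n ^ 2 := by
  rw [alphaF_eq, alphaF_eq, tsum_nat_add_one_add_eq hsum n, ← Real.exp_log (hθ n),
    ← Real.exp_nat_mul, ← Real.exp_add, thetaSummand, add_sub_cancel_right]
  congr 1
  rw [zpow_add_one₀ two_ne_zero, zpow_neg, zpow_add_one₀ two_ne_zero]
  field_simp
  ring

theorem existsUnique_eq_alphaF (hsum : Summable (thetaSummand k γ ρ)) {u : ℤ → ℝ}
    (hu : ∀ n, 0 < u n) (hu' : ∀ n, u (n + 1) = thetaF k γ ρ n * u n ^ 2) :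
    ∃! A, u = alphaF k γ ρ A := by
  have hθ : ∀ n, 0 < thetaF k γ ρ n := fun n => by
    have := hu (n + 1)
    rw [hu'] at this
    exact pos_of_mul_pos_left this (sq_nonneg _)
  set T := ∑' m : ℕ, thetaSummand k γ ρ (0 + 1 + m)
  have hzero : ∀ A, alphaF k γ ρ A 0 = Real.exp (-(A + T)) := fun A => by
    rw [alphaF_eq, zpow_zero, mul_one]
  refine ⟨-Real.log (u 0) - T, eq_of_forall_succ_eq_mul_sq hu (alphaF_pos _) hu'
    (alphaF_succ hθ hsum _) ?_, fun B hB => ?_⟩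
  · rw [hzero, show -(-Real.log (u 0) - T + T) = Real.log (u 0) by ring, Real.exp_log (hu 0)]
  · have h0 := congrArg Real.log (congrFun hB 0)
    rw [hzero, Real.log_exp] at h0
    linarith

end Theta

theorem stmt1_general
    (α β αb βb k₀ γ₀ : ℝ)
    (hαb : 1 < αb) (hβb : 1 < βb) (hk₀ : 0 < k₀) (hγ₀ : 0 < γ₀)
    (k γ : ℝ → ℝ)
    (hk_pos : ∀ ξ : ℝ, 0 ≤ ξ → 0 < k ξ)
    (hk_inf : Tendsto (fun ξ : ℝ => k ξ / ξ ^ (α + 1)) atTop (𝓝 1))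
    (hk_0 : (fun ξ : ℝ => k ξ - k₀) =O[𝓝[>] 0] fun ξ : ℝ => ξ ^ αb)
    (hγ_pos : ∀ ξ : ℝ, 0 < ξ → 0 < γ ξ)
    (hγ_inf : Tendsto (fun ξ : ℝ => γ ξ / ξ ^ β) atTop (𝓝 1))
    (hγ_0 : (fun ξ : ℝ => γ ξ - γ₀) =O[𝓝[>] 0] fun ξ : ℝ => ξ ^ βb)
    (ρ : ℝ) :
    Summable (fun j : ℤ => |(2:ℝ) ^ (-j) * Real.log (thetaF k γ ρ (j - 1))|) ∧
    (∀ A : ℝ,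
      (∀ n : ℤ, 0 < alphaF k γ ρ A n) ∧
      (∀ n : ℤ, alphaF k γ ρ A (n + 1) = thetaF k γ ρ n * (alphaF k γ ρ A n) ^ 2) ∧
      Tendsto (fun n : ℤ =>
          (alphaF k γ ρ A n -
            (1 + (-A - ∑' j : ℤ, (2:ℝ) ^ (-j) * Real.log (thetaF k γ ρ (j - 1))) * (2:ℝ) ^ n)) /
            (2:ℝ) ^ n) atBot (𝓝 0)) ∧
    (∀ α' : ℤ → ℝ, (∀ n : ℤ, 0 < α' n) →
      (∀ n : ℤ, α' (n + 1) = thetaF k γ ρ n * (α' n) ^ 2) →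
      ∃! A : ℝ, α' = alphaF k γ ρ A) := by
  have hθ : ∀ n, 0 < thetaF k γ ρ n := thetaF_pos hk_pos hγ_pos
  have hsum : Summable (thetaSummand k γ ρ) := summable_thetaSummand hk_pos hγ_pos hk_inf
    hγ_inf hk₀.ne' hγ₀.ne' hαb hβb hk_0 hγ_0
  refine ⟨hsum.abs, fun A => ⟨alphaF_pos A, alphaF_succ hθ hsum A, ?_⟩,
    fun u hu hu' => existsUnique_eq_alphaF hsum hu hu'⟩
  have hasymp := isLittleO_exp_neg_mul_two_zpow (tendsto_tsum_nat_add_atBot hsum) A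
  exact (hasymp.congr_left fun n => by rw [alphaF_eq]; rfl).tendsto_div_nhds_zero

/-- Absolute convergence of `Θ_ρ = Σ_{j∈ℤ} 2^{−j} ln θ_{j−1,ρ}`; for each `A ∈ ℝ`
the sequence `α_n(A,ρ)` is positive, solves `α_{n+1} = θ_{n,ρ} α_n²`, and satisfies
`α_n = 1 + (−A − Θ_ρ)·2^n + o(2^n)` as `n → −∞`; conversely every positive solution of the
recurrence is `α·(A,ρ)` for a unique `A`. -/
theorem stmt1
    (α β αb βb k₀ γ₀ : ℝ)
    (hα : α ∈ Set.Ioo (0:ℝ) 1) (hβ : β ∈ Set.Ioo (1:ℝ) 2)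
    (hαb : 1 < αb) (hβb : 1 < βb) (hk₀ : 0 < k₀) (hγ₀ : 0 < γ₀)
    (k γ : ℝ → ℝ)
    (hk_cont : ContinuousOn k (Set.Ici 0)) (hk_pos : ∀ ξ : ℝ, 0 ≤ ξ → 0 < k ξ)
    (hk_inf : Tendsto (fun ξ : ℝ => k ξ / ξ ^ (α + 1)) atTop (𝓝 1))
    (hk_0 : (fun ξ : ℝ => k ξ - k₀) =O[𝓝[>] 0] fun ξ : ℝ => ξ ^ αb)
    (hγ_cont : ContinuousOn γ (Set.Ioi 0)) (hγ_pos : ∀ ξ : ℝ, 0 < ξ → 0 < γ ξ)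
    (hγ_inf : Tendsto (fun ξ : ℝ => γ ξ / ξ ^ β) atTop (𝓝 1))
    (hγ_0 : (fun ξ : ℝ => γ ξ - γ₀) =O[𝓝[>] 0] fun ξ : ℝ => ξ ^ βb)
    (ρ : ℝ) (hρ : ρ ∈ Set.Ico (0:ℝ) 1) :
    Summable (fun j : ℤ => |(2:ℝ) ^ (-j) * Real.log (thetaF k γ ρ (j - 1))|) ∧
    (∀ A : ℝ,
      (∀ n : ℤ, 0 < alphaF k γ ρ A n) ∧
      (∀ n : ℤ, alphaF k γ ρ A (n + 1) = thetaF k γ ρ n * (alphaF k γ ρ A n) ^ 2) ∧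
      Tendsto (fun n : ℤ =>
          (alphaF k γ ρ A n -
            (1 + (-A - ∑' j : ℤ, (2:ℝ) ^ (-j) * Real.log (thetaF k γ ρ (j - 1))) * (2:ℝ) ^ n)) /
            (2:ℝ) ^ n) atBot (𝓝 0)) ∧
    (∀ α' : ℤ → ℝ, (∀ n : ℤ, 0 < α' n) →
      (∀ n : ℤ, α' (n + 1) = thetaF k γ ρ n * (α' n) ^ 2) →
      ∃! A : ℝ, α' = alphaF k γ ρ A) :=
  stmt1_general α β αb βb k₀ γ₀ hαb hβb hk₀ hγ₀ k γ hk_pos hk_inf hk_0 hγ_pos hγ_inf hγ_0 ρ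
end
end

section
/- For every A ∈ ℝ and ρ ∈ [0,1), the sequence α_n(A,ρ) satisfies 2^{α−β+1}·e^{A·2^n}·α_n(A,ρ) → 1 as n → ∞; that is, α_n(A,ρ) is asymptotic to e^{−A·2^n}/2^{α−β+1} as n → ∞. -/
/-!
With `ζ(ξ) = ln 2 · k(ξ) / (ξ γ(2ξ))` we have `ζ_{n,ρ} = ζ(2^{n+ρ})` and
`ζ_{n+1,ρ} = ζ(2 · 2^{n+ρ})`. The growth conditions at infinity make `ζ` regularly varying,
`ζ(ξ) ~ c ξ^{α-β}`, hence `θ_{n,ρ} → 2 · 2^{α-β}`. Putting `j = n + 1 + m`, the exponent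
`2^n Σ_{j>n} 2^{-j} ln θ_{j-1,ρ}` becomes the weighted mean `Σ_m 2^{-(m+1)} ln θ_{n+m,ρ}`, with
weights summing to `1`, which tends to `ln 2^{α-β+1}` by dominated convergence.
-/

open Filter Topology Asymptotics MeasureTheory

noncomputable section

theorem tendsto_tsum_mul_add_of_tendsto {w : ℕ → ℝ} {s : ℝ} (hw : HasSum w s) {u : ℤ → ℝ}
    {L : ℝ} (hu : Tendsto u atTop (𝓝 L)) :
    Tendsto (fun n : ℤ => ∑' m : ℕ, w m * u (n + m)) atTop (𝓝 (s * L)) := by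
  obtain ⟨N, hN⟩ := eventually_atTop.1 (hu.norm.eventually (eventually_le_nhds (lt_add_one ‖L‖)))
  rw [← hw.tsum_eq, ← tsum_mul_right]
  refine tendsto_tsum_of_dominated_convergence (bound := fun m => ‖w m‖ * (‖L‖ + 1))
    (hw.summable.norm.mul_right _) (fun m => ?_) ?_
  · exact (hu.comp (tendsto_atTop_add_const_right _ _ tendsto_id)).const_mul _
  · filter_upwards [eventually_ge_atTop N] with n hn m
    rw [norm_mul]
    exact mul_le_mul_of_nonneg_left (hN _ (by omega)) (norm_nonneg _)

lemma two_zpow_mul_two_zpow_neg_add (n : ℤ) (m : ℕ) :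
    (2:ℝ) ^ n * 2 ^ (-(n + 1 + (m:ℤ))) = 1 / 2 / 2 ^ m := by
  rw [← zpow_add₀ two_ne_zero, show n + -(n + 1 + (m:ℤ)) = -((m + 1 : ℕ) : ℤ) by push_cast; ring,
    zpow_neg, zpow_natCast, pow_succ]
  ring

lemma exp_mul_alphaF (k γ : ℝ → ℝ) (ρ A : ℝ) (n : ℤ) :
    Real.exp (A * 2 ^ n) * alphaF k γ ρ A n =
      Real.exp (-∑' m : ℕ, 1 / 2 / 2 ^ m * Real.log (thetaF k γ ρ (n + m))) := by
  rw [alphaF, ← mul_assoc, ← Real.exp_add, add_neg_cancel, Real.exp_zero, one_mul,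
    ← tsum_mul_left]
  simp_rw [← mul_assoc, two_zpow_mul_two_zpow_neg_add]

lemma tendsto_comp_two_mul_div_of_isEquivalent_rpow {h : ℝ → ℝ} {c p : ℝ} (hc : c ≠ 0)
    (hh : h ~[atTop] fun ξ => c * ξ ^ p) :
    Tendsto (fun ξ => h (2 * ξ) / h ξ) atTop (𝓝 (2 ^ p)) := by
  have h2 : (fun ξ => h (2 * ξ)) ~[atTop] fun ξ => c * (2 * ξ) ^ p :=
    hh.comp_tendsto (tendsto_id.const_mul_atTop two_pos)
  refine ((h2.div hh).congr_right ?_).symm.tendsto_nhds tendsto_const_nhds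
  filter_upwards [eventually_gt_atTop 0] with ξ hξ
  have : ξ ^ p ≠ 0 := (Real.rpow_pos_of_pos hξ p).ne'
  simp only [Pi.div_apply, Real.mul_rpow zero_le_two hξ.le]
  field_simp

def zetaFun (k γ : ℝ → ℝ) (ξ : ℝ) : ℝ := Real.log 2 * k ξ / (ξ * γ (2 * ξ))

lemma thetaF_eq_zetaFun (k γ : ℝ → ℝ) (ρ : ℝ) (n : ℤ) :
    thetaF k γ ρ n =
      2 * (zetaFun k γ (2 * 2 ^ ((n:ℝ) + ρ)) / zetaFun k γ (2 ^ ((n:ℝ) + ρ))) := by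
  have hsucc (x : ℝ) : (2:ℝ) ^ (x + 1) = 2 * 2 ^ x := by
    rw [Real.rpow_add_one two_ne_zero, mul_comm]
  simp only [thetaF, zeta, zetaFun, mul_div_assoc, Int.cast_add, Int.cast_one,
    add_right_comm _ (1:ℝ), hsucc]

section

variable {α β : ℝ} {k γ : ℝ → ℝ}

lemma zetaFun_isEquivalent (hk : Tendsto (fun ξ => k ξ / ξ ^ (α + 1)) atTop (𝓝 1))
    (hγ : Tendsto (fun ξ => γ ξ / ξ ^ β) atTop (𝓝 1)) :
    zetaFun k γ ~[atTop] fun ξ => Real.log 2 * 2 ^ (-β) * ξ ^ (α - β) := by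
  have hk' : k ~[atTop] fun ξ => ξ ^ (α + 1) := isEquivalent_of_tendsto_one hk
  have hγ' : (fun ξ => γ (2 * ξ)) ~[atTop] fun ξ => (2 * ξ) ^ β :=
    (isEquivalent_of_tendsto_one hγ).comp_tendsto (tendsto_id.const_mul_atTop two_pos)
  have hnum := (IsEquivalent.refl (u := fun _ : ℝ => Real.log 2)).mul hk'
  have hden := (IsEquivalent.refl (u := fun ξ : ℝ => ξ)).mul hγ'
  refine (hnum.div hden).congr_right ?_
  filter_upwards [eventually_gt_atTop 0] with ξ hξ
  have : ξ ^ β ≠ 0 := (Real.rpow_pos_of_pos hξ β).ne'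
  simp only [Pi.div_apply, Pi.mul_apply, Real.mul_rpow zero_le_two hξ.le, Real.rpow_neg zero_le_two,
    Real.rpow_sub hξ, Real.rpow_add_one hξ.ne']
  field_simp

lemma tendsto_thetaF (hk : Tendsto (fun ξ => k ξ / ξ ^ (α + 1)) atTop (𝓝 1))
    (hγ : Tendsto (fun ξ => γ ξ / ξ ^ β) atTop (𝓝 1)) (ρ : ℝ) :
    Tendsto (thetaF k γ ρ) atTop (𝓝 (2 ^ (α - β + 1))) := by
  have hc : Real.log 2 * 2 ^ (-β) ≠ 0 :=
    mul_ne_zero (Real.log_pos one_lt_two).ne' (Real.rpow_pos_of_pos two_pos _).ne'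
  have hX : Tendsto (fun n : ℤ => (2:ℝ) ^ ((n:ℝ) + ρ)) atTop atTop :=
    (tendsto_rpow_atTop_of_base_gt_one 2 one_lt_two).comp
      (tendsto_atTop_add_const_right _ ρ tendsto_intCast_atTop_atTop)
  have h := ((tendsto_comp_two_mul_div_of_isEquivalent_rpow hc
    (zetaFun_isEquivalent hk hγ)).comp hX).const_mul 2
  rw [Real.rpow_add_one two_ne_zero, mul_comm]
  exact h.congr fun n => (thetaF_eq_zetaFun k γ ρ n).symm

end

theorem stmt2_general
    (α β : ℝ)
    (k γ : ℝ → ℝ)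
    (hk_inf : Tendsto (fun ξ : ℝ => k ξ / ξ ^ (α + 1)) atTop (𝓝 1))
    (hγ_inf : Tendsto (fun ξ : ℝ => γ ξ / ξ ^ β) atTop (𝓝 1))
    (ρ : ℝ) (A : ℝ) :
    Tendsto (fun n : ℤ =>
        (2:ℝ) ^ (α - β + 1) * Real.exp (A * (2:ℝ) ^ n) * alphaF k γ ρ A n) atTop (𝓝 1) := by
  have hpos : (0:ℝ) < 2 ^ (α - β + 1) := Real.rpow_pos_of_pos two_pos _
  have hlog := (tendsto_thetaF hk_inf hγ_inf ρ).log hpos.ne'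
  have hmean := tendsto_tsum_mul_add_of_tendsto (hasSum_geometric_two' 1) hlog
  have h := (hmean.neg.rexp).const_mul (2 ^ (α - β + 1))
  rw [one_mul, Real.exp_neg, Real.exp_log hpos, mul_inv_cancel₀ hpos.ne'] at h
  exact h.congr fun n => by rw [mul_assoc, exp_mul_alphaF]

/-- `α_n(A,ρ) ~ e^{−A·2^n} / 2^{α−β+1}` as `n → ∞`, i.e.
`2^{α−β+1}·e^{A·2^n}·α_n(A,ρ) → 1`. -/
theorem stmt2
    (α β αb βb k₀ γ₀ : ℝ)
    (hα : α ∈ Set.Ioo (0:ℝ) 1) (hβ : β ∈ Set.Ioo (1:ℝ) 2)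
    (hαb : 1 < αb) (hβb : 1 < βb) (hk₀ : 0 < k₀) (hγ₀ : 0 < γ₀)
    (k γ : ℝ → ℝ)
    (hk_cont : ContinuousOn k (Set.Ici 0)) (hk_pos : ∀ ξ : ℝ, 0 ≤ ξ → 0 < k ξ)
    (hk_inf : Tendsto (fun ξ : ℝ => k ξ / ξ ^ (α + 1)) atTop (𝓝 1))
    (hk_0 : (fun ξ : ℝ => k ξ - k₀) =O[𝓝[>] 0] fun ξ : ℝ => ξ ^ αb)
    (hγ_cont : ContinuousOn γ (Set.Ioi 0)) (hγ_pos : ∀ ξ : ℝ, 0 < ξ → 0 < γ ξ)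
    (hγ_inf : Tendsto (fun ξ : ℝ => γ ξ / ξ ^ β) atTop (𝓝 1))
    (hγ_0 : (fun ξ : ℝ => γ ξ - γ₀) =O[𝓝[>] 0] fun ξ : ℝ => ξ ^ βb)
    (ρ : ℝ) (hρ : ρ ∈ Set.Ico (0:ℝ) 1) (A : ℝ) :
    Tendsto (fun n : ℤ =>
        (2:ℝ) ^ (α - β + 1) * Real.exp (A * (2:ℝ) ^ n) * alphaF k γ ρ A n) atTop (𝓝 1) :=
  stmt2_general α β k γ hk_inf hγ_inf ρ A
end
end

section
/- For every ρ ∈ [0,1) and every A > 0, the series M(A) := Σ_{n∈ℤ} 2^{n+ρ+1}·ζ_{n,ρ}^{−1}·α_n(A,ρ) converges. The function A ↦ M(A) is strictly decreasing on (0,∞), M(A) → 0 as A → ∞, and M(A) → ∞ as A → 0⁺. Consequently, for every M > 0 there exists a unique A_M > 0 with M(A_M) = M. -/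
open Filter Topology Asymptotics MeasureTheory

noncomputable section

/-!
The parameter `A` enters the `n`-th term of `M(A)` only through the factor `exp (-A 2ⁿ)`, so
`M(A) = ∑ₙ Qₙ exp (-A 2ⁿ)` with `Qₙ > 0` independent of `A`. Since `k ≍ 1 + ξ^(α+1)` and
`γ ≍ 1 + ξ^β` on `(0, ∞)` (continuity plus the limits at `0⁺` and `∞`), the ratios `θ_{n,ρ}` are
bounded and bounded away from `0`; the tail sum in `α_n` is a weighted average of the bounded
numbers `ln θ_{j,ρ}`, so it only contributes a factor in `[e^{-B}, e^B]`. Hence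
`Qₙ ≲ 4ⁿ + 16ⁿ`, which `exp (-A 2ⁿ)` makes summable for every `A > 0`, while `Qₙ ≳ 1` for
`n ≥ 0` because `k` grows no faster than `ξ²`, so `∑ Qₙ = ∞` and `M(A) → ∞` as `A → 0⁺`. Strict
monotonicity, continuity and `M(A) → 0` at `∞` hold for any such series, and the intermediate
value theorem gives `A_M`.
-/

open Set

def expSum {ι : Type*} (Q w : ι → ℝ) (A : ℝ) : ℝ := ∑' i, Q i * Real.exp (-(A * w i))

section expSum

variable {ι : Type*} {Q w : ι → ℝ}

theorem expSum_strictAntiOn (hQ : ∀ i, 0 ≤ Q i) (hw : ∀ i, 0 < w i) (hQi : ∃ i, 0 < Q i)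
    (hs : ∀ A, 0 < A → Summable fun i => Q i * Real.exp (-(A * w i))) :
    StrictAntiOn (expSum Q w) (Ioi 0) := by
  obtain ⟨i, hi⟩ := hQi
  intro a ha b hb hab
  refine Summable.tsum_lt_tsum (i := i) (fun j => ?_) ?_ (hs b hb) (hs a ha)
  · gcongr
    exacts [hQ j, (hw j).le]
  · gcongr
    exact hw i

theorem expSum_continuousOn (hQ : ∀ i, 0 ≤ Q i) (hw : ∀ i, 0 ≤ w i)
    (hs : ∀ A, 0 < A → Summable fun i => Q i * Real.exp (-(A * w i))) :
    ContinuousOn (expSum Q w) (Ioi 0) := by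
  intro a (ha : 0 < a)
  have hcont : ContinuousOn (expSum Q w) (Ioi (a / 2)) := by
    refine continuousOn_tsum (fun i => by fun_prop) (hs (a / 2) (by positivity))
      fun i A (hA : a / 2 < A) => ?_
    rw [Real.norm_of_nonneg (by have := hQ i; positivity)]
    gcongr
    exacts [hQ i, hw i]
  exact (hcont.continuousAt (Ioi_mem_nhds (by linarith))).continuousWithinAt

theorem tendsto_expSum_atTop (hQ : ∀ i, 0 ≤ Q i) (hw : ∀ i, 0 < w i)
    (hs : ∀ A, 0 < A → Summable fun i => Q i * Real.exp (-(A * w i))) :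
    Tendsto (expSum Q w) atTop (𝓝 0) := by
  have h := tendsto_tsum_of_dominated_convergence (𝓕 := atTop) (g := fun _ : ι => (0 : ℝ))
    (f := fun A i => Q i * Real.exp (-(A * w i))) (hs 1 one_pos) (fun i => ?_) ?_
  · rwa [tsum_zero] at h
  · simpa using ((Real.tendsto_exp_neg_atTop_nhds_zero.comp
      (tendsto_id.atTop_mul_const (hw i))).const_mul (Q i))
  · filter_upwards [eventually_ge_atTop 1] with A hA i
    rw [Real.norm_of_nonneg (by have := hQ i; positivity)]
    gcongr
    exacts [hQ i, (hw i).le]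

theorem tendsto_expSum_nhdsGT_zero (hQ : ∀ i, 0 ≤ Q i) (hQs : ¬Summable Q)
    (hs : ∀ A, 0 < A → Summable fun i => Q i * Real.exp (-(A * w i))) :
    Tendsto (expSum Q w) (𝓝[>] 0) atTop := by
  refine tendsto_atTop.2 fun C => ?_
  obtain ⟨s, hCs⟩ : ∃ s : Finset ι, C < ∑ i ∈ s, Q i := by
    by_contra! h
    exact hQs (summable_of_sum_le hQ h)
  have hfin : Tendsto (fun A => ∑ i ∈ s, Q i * Real.exp (-(A * w i))) (𝓝[>] 0)
      (𝓝 (∑ i ∈ s, Q i)) := by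
    have : Continuous fun A => ∑ i ∈ s, Q i * Real.exp (-(A * w i)) := by fun_prop
    simpa using (this.tendsto 0).mono_left nhdsWithin_le_nhds
  filter_upwards [hfin.eventually (lt_mem_nhds hCs), self_mem_nhdsWithin] with A hA (hA0 : 0 < A)
  exact hA.le.trans <| (hs A hA0).sum_le_tsum s fun i _ => by have := hQ i; positivity

end expSum

theorem existsUnique_pos_eq_of_strictAntiOn {f : ℝ → ℝ} (hf : StrictAntiOn f (Ioi 0))
    (hc : ContinuousOn f (Ioi 0)) (h0 : Tendsto f (𝓝[>] 0) atTop)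
    (htop : Tendsto f atTop (𝓝 0)) {M : ℝ} (hM : 0 < M) : ∃! A, 0 < A ∧ f A = M := by
  obtain ⟨a, haM, ha⟩ := ((h0.eventually_gt_atTop M).and self_mem_nhdsWithin).exists
  obtain ⟨b, hbM, hab⟩ := ((htop.eventually (gt_mem_nhds hM)).and (eventually_ge_atTop a)).exists
  obtain ⟨A, hA, rfl⟩ := intermediate_value_Icc' hab (hc.mono fun x hx => lt_of_lt_of_le ha hx.1)
    ⟨hbM.le, haM.le⟩
  have hA0 : 0 < A := lt_of_lt_of_le ha hA.1
  exact ⟨A, ⟨hA0, rfl⟩, fun B ⟨hB0, hB⟩ => hf.injOn hB0 hA0 hB⟩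

theorem pow_mul_exp_neg_le {A t : ℝ} (hA : 0 < A) (ht : 0 < t) (j : ℕ) :
    t ^ j * Real.exp (-(A * t)) ≤ (j + 1).factorial / A ^ (j + 1) * t⁻¹ := by
  have h := Real.pow_div_factorial_le_exp (A * t) (by positivity) (j + 1)
  rw [Real.exp_neg, ← div_eq_mul_inv, div_le_iff₀ (Real.exp_pos _)]
  rw [div_le_iff₀ (by positivity)] at h
  calc t ^ j
      = (j + 1).factorial / A ^ (j + 1) * t⁻¹ * ((A * t) ^ (j + 1) / (j + 1).factorial) := by
        field_simp; ring
    _ ≤ (j + 1).factorial / A ^ (j + 1) * t⁻¹ * Real.exp (A * t) := by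
        gcongr; rwa [div_le_iff₀ (by positivity)]

theorem summable_two_zpow_pow_mul_exp_neg {j : ℕ} (hj : 0 < j) {A : ℝ} (hA : 0 < A) :
    Summable fun n : ℤ => ((2 : ℝ) ^ n) ^ j * Real.exp (-(A * 2 ^ n)) := by
  refine .of_nat_of_neg ?_ ?_
  · refine .of_nonneg_of_le (fun n => by positivity) (fun n => ?_)
      (summable_geometric_two.mul_left ((j + 1).factorial / A ^ (j + 1)))
    simpa [zpow_natCast] using pow_mul_exp_neg_le hA (by positivity : (0 : ℝ) < 2 ^ n) j
  · refine .of_nonneg_of_le (fun n => by positivity) (fun n => ?_) summable_geometric_two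
    have h2n : (2 : ℝ) ^ (-(n : ℤ)) = (1 / 2) ^ n := by simp [zpow_neg]
    rw [h2n]
    calc ((1 / 2 : ℝ) ^ n) ^ j * Real.exp (-(A * (1 / 2) ^ n)) ≤ ((1 / 2 : ℝ) ^ n) ^ j * 1 := by
          gcongr; rw [Real.exp_le_one_iff]; simp only [neg_nonpos]; positivity
      _ ≤ (1 / 2) ^ n := by
          rw [mul_one]
          exact pow_le_of_le_one (by positivity) (pow_le_one₀ (by norm_num) (by norm_num)) hj.ne'

theorem abs_two_zpow_mul_tsum_le {f : ℕ → ℝ} {B : ℝ} (hf : ∀ m, |f m| ≤ B) (n : ℤ) :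
    |(2 : ℝ) ^ n * ∑' m : ℕ, (2 : ℝ) ^ (-(n + 1 + (m : ℤ))) * f m| ≤ B := by
  rw [← tsum_mul_left, ← Real.norm_eq_abs]
  -- the weights `2 ^ n * 2 ^ (-(n + 1 + m)) = 2⁻¹ / 2 ^ m` sum to `1`
  refine tsum_of_norm_bounded (hasSum_geometric_two' B) fun m => ?_
  have h : (2 : ℝ) ^ n * 2 ^ (-(n + 1 + (m : ℤ))) = 1 / 2 / 2 ^ m := by
    rw [zpow_neg, zpow_add₀ two_ne_zero, zpow_add₀ two_ne_zero, zpow_natCast]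
    field_simp
  rw [← mul_assoc, h, norm_mul, Real.norm_eq_abs, abs_of_pos (by positivity)]
  calc 1 / 2 / 2 ^ m * |f m| ≤ 1 / 2 / 2 ^ m * B := by gcongr; exact hf m
    _ = B / 2 / 2 ^ m := by ring

theorem tendsto_rpow_nhdsGT_zero {p : ℝ} (hp : 0 < p) :
    Tendsto (fun x : ℝ => x ^ p) (𝓝[>] 0) (𝓝 0) := by
  simpa [Real.zero_rpow hp.ne'] using
    (Real.continuousAt_rpow_const 0 p (Or.inr hp.le)).tendsto.mono_left nhdsWithin_le_nhds

theorem exists_bounds_of_tendsto_nhdsGT_zero_of_tendsto_atTop {f : ℝ → ℝ}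
    (hc : ContinuousOn f (Ioi 0)) (hpos : ∀ x, 0 < x → 0 < f x) {l₀ l₁ : ℝ}
    (h0 : Tendsto f (𝓝[>] 0) (𝓝 l₀)) (h1 : Tendsto f atTop (𝓝 l₁)) (hl₀ : 0 < l₀)
    (hl₁ : 0 < l₁) : ∃ c C, 0 < c ∧ ∀ x, 0 < x → c ≤ f x ∧ f x ≤ C := by
  obtain ⟨δ, hδ, hnear⟩ := mem_nhdsGT_iff_exists_Ioo_subset.1
    (h0.eventually (Icc_mem_nhds (half_lt_self hl₀) (lt_add_one l₀)))
  obtain ⟨R, hfar⟩ := eventually_atTop.1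
    (h1.eventually (Icc_mem_nhds (half_lt_self hl₁) (lt_add_one l₁)))
  have hK : Icc δ (max R δ) ⊆ Ioi 0 := fun x hx => lt_of_lt_of_le hδ hx.1
  obtain ⟨m, hmK, hm⟩ := isCompact_Icc.exists_isMinOn (nonempty_Icc.2 (le_max_right R δ))
    (hc.mono hK)
  obtain ⟨C, hC⟩ := isCompact_Icc.bddAbove_image (hc.mono hK)
  refine ⟨min (min (l₀ / 2) (l₁ / 2)) (f m), max (max (l₀ + 1) (l₁ + 1)) C,
    lt_min (lt_min (by positivity) (by positivity)) (hpos m (hK hmK)), fun x hx => ?_⟩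
  rcases lt_or_ge x δ with hxδ | hxδ
  · obtain ⟨hlo, hhi⟩ := hnear ⟨hx, hxδ⟩
    exact ⟨by simp [hlo], by simp [hhi]⟩
  rcases le_or_gt x (max R δ) with hxR | hxR
  · exact ⟨min_le_of_right_le (hm ⟨hxδ, hxR⟩),
      le_max_of_le_right (hC (mem_image_of_mem f ⟨hxδ, hxR⟩))⟩
  · obtain ⟨hlo, hhi⟩ := hfar x (le_of_max_le_left hxR.le)
    exact ⟨by simp [hlo], by simp [hhi]⟩

def OnePlusRpowBounds (f : ℝ → ℝ) (p c C : ℝ) : Prop :=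
  ∀ x, 0 < x → c * (1 + x ^ p) ≤ f x ∧ f x ≤ C * (1 + x ^ p)

theorem OnePlusRpowBounds.pos {f : ℝ → ℝ} {p c C : ℝ} (hf : OnePlusRpowBounds f p c C)
    (hc : 0 < c) {x : ℝ} (hx : 0 < x) : 0 < f x :=
  lt_of_lt_of_le (by positivity) (hf x hx).1

theorem OnePlusRpowBounds.lower_le_upper {f : ℝ → ℝ} {p c C : ℝ} (hf : OnePlusRpowBounds f p c C) :
    c ≤ C := by
  have h := (hf 1 one_pos).1.trans (hf 1 one_pos).2
  rw [Real.one_rpow] at h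
  linarith

theorem exists_onePlusRpowBounds {f : ℝ → ℝ} {p l : ℝ} (hp : 0 < p) (hl : 0 < l)
    (hc : ContinuousOn f (Ioi 0)) (hpos : ∀ x, 0 < x → 0 < f x)
    (h0 : Tendsto f (𝓝[>] 0) (𝓝 l)) (hinf : Tendsto (fun x => f x / x ^ p) atTop (𝓝 1)) :
    ∃ c C, 0 < c ∧ OnePlusRpowBounds f p c C := by
  have hg : ∀ x : ℝ, 0 < x → 0 < 1 + x ^ p := fun x hx => by positivity
  have hgc : ContinuousOn (fun x : ℝ => 1 + x ^ p) (Ioi 0) := fun x hx =>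
    (continuousAt_const.add (Real.continuousAt_rpow_const x p (Or.inl hx.ne'))).continuousWithinAt
  have hg0 : Tendsto (fun x : ℝ => 1 + x ^ p) (𝓝[>] 0) (𝓝 1) := by
    simpa using (tendsto_rpow_nhdsGT_zero hp).const_add 1
  have hratio : Tendsto (fun x : ℝ => x ^ p / (1 + x ^ p)) atTop (𝓝 1) := by
    have h := ((tendsto_rpow_atTop hp).inv_tendsto_atTop.const_add 1).inv₀ (by norm_num)
    refine (by simpa using h : Tendsto (fun x : ℝ => (1 + (x ^ p)⁻¹)⁻¹) atTop (𝓝 1)).congr' ?_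
    filter_upwards [eventually_gt_atTop 0] with x hx
    have := Real.rpow_pos_of_pos hx p
    field_simp
    ring
  have hinf' : Tendsto (fun x => f x / (1 + x ^ p)) atTop (𝓝 1) := by
    have h := hinf.mul hratio
    rw [mul_one] at h
    refine h.congr' ?_
    filter_upwards [eventually_gt_atTop 0] with x hx
    have := Real.rpow_pos_of_pos hx p
    field_simp
  obtain ⟨c, C, hc0, hcC⟩ := exists_bounds_of_tendsto_nhdsGT_zero_of_tendsto_atTop
    (f := fun x => f x / (1 + x ^ p)) (hc.div hgc fun x hx => (hg x hx).ne')
    (fun x hx => div_pos (hpos x hx) (hg x hx))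
    (div_one l ▸ h0.div hg0 one_ne_zero) hinf' hl one_pos
  refine ⟨c, C, hc0, fun x hx => ?_⟩
  have := hcC x hx
  rwa [le_div_iff₀ (hg x hx), div_le_iff₀ (hg x hx)] at this

theorem abs_log_div_le_of_onePlusRpowBounds {f : ℝ → ℝ} {p c C x : ℝ} (hp : 0 ≤ p) (hc : 0 < c)
    (hf : OnePlusRpowBounds f p c C) (hx : 0 < x) :
    |Real.log (f (2 * x) / f x)| ≤ Real.log (2 ^ p * C / c) := by
  obtain ⟨hx₁, hx₂⟩ := hf x hx
  obtain ⟨h2x₁, h2x₂⟩ := hf (2 * x) (by positivity)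
  have hmono : 1 + x ^ p ≤ 1 + (2 * x) ^ p := by gcongr; linarith
  have hdoubling : 1 + (2 * x) ^ p ≤ 2 ^ p * (1 + x ^ p) := by
    rw [Real.mul_rpow zero_le_two hx.le]
    nlinarith [Real.one_le_rpow one_le_two hp, Real.rpow_nonneg hx.le p]
  have hfx : 0 < f x := lt_of_lt_of_le (by positivity) hx₁
  have hf2x : 0 < f (2 * x) := lt_of_lt_of_le (by positivity) h2x₁
  have h2p : 1 ≤ (2 : ℝ) ^ p := Real.one_le_rpow one_le_two hp
  have hC : 0 < C := pos_of_mul_pos_left ((by positivity : 0 < c * (1 + x ^ p)).trans_le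
    (hx₁.trans hx₂)) (by positivity)
  have hb : 0 < 2 ^ p * C / c := by positivity
  have hle : f (2 * x) / f x ≤ 2 ^ p * C / c := by
    rw [div_le_div_iff₀ hfx hc]
    calc f (2 * x) * c ≤ C * (2 ^ p * (1 + x ^ p)) * c := by gcongr; exact h2x₂.trans (by gcongr)
      _ = 2 ^ p * C * (c * (1 + x ^ p)) := by ring
      _ ≤ 2 ^ p * C * f x := by gcongr
  have hge : (2 ^ p * C / c)⁻¹ ≤ f (2 * x) / f x := by
    rw [inv_div, div_le_div_iff₀ (by positivity) hfx]
    calc c * f x ≤ c * (C * (1 + (2 * x) ^ p)) := by gcongr; exact hx₂.trans (by gcongr)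
      _ = C * (c * (1 + (2 * x) ^ p)) := by ring
      _ ≤ C * f (2 * x) := by gcongr
      _ ≤ f (2 * x) * (2 ^ p * C) := by
        nlinarith [mul_nonneg (sub_nonneg.2 h2p) (mul_nonneg hC.le hf2x.le)]
  have hlog := Real.log_le_log (inv_pos.2 hb) hge
  rw [Real.log_inv] at hlog
  exact abs_le.2 ⟨by linarith, Real.log_le_log ((inv_pos.2 hb).trans_le hge) hle⟩

theorem rpow_le_one_add_sq {x q : ℝ} (hx : 0 ≤ x) (hq : 0 ≤ q) (hq2 : q ≤ 2) :
    x ^ q ≤ 1 + x ^ 2 := by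
  rcases le_total x 1 with hx1 | hx1
  · linarith [Real.rpow_le_one hx hx1 hq, sq_nonneg x]
  · have := Real.rpow_le_rpow_of_exponent_le hx1 hq2
    norm_cast at this
    linarith

def xi (ρ : ℝ) (n : ℤ) : ℝ := (2 : ℝ) ^ ((n : ℝ) + ρ)

theorem xi_pos (ρ : ℝ) (n : ℤ) : 0 < xi ρ n := Real.rpow_pos_of_pos two_pos _

theorem two_rpow_add_one_eq (ρ : ℝ) (n : ℤ) : (2 : ℝ) ^ ((n : ℝ) + ρ + 1) = 2 * xi ρ n := by
  rw [Real.rpow_add_one two_ne_zero, xi, mul_comm]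

theorem xi_add_one (ρ : ℝ) (n : ℤ) : xi ρ (n + 1) = 2 * xi ρ n := by
  rw [← two_rpow_add_one_eq, xi]
  push_cast
  ring_nf

theorem xi_eq_zpow_mul (ρ : ℝ) (n : ℤ) : xi ρ n = 2 ^ n * 2 ^ ρ := by
  rw [xi, Real.rpow_add two_pos, Real.rpow_intCast]

theorem zeta_eq (k γ : ℝ → ℝ) (ρ : ℝ) (n : ℤ) :
    zeta k γ ρ n = Real.log 2 * k (xi ρ n) / (xi ρ n * γ (2 * xi ρ n)) := by
  rw [zeta, two_rpow_add_one_eq]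
  rfl

theorem thetaF_eq {k γ : ℝ → ℝ} (hk : ∀ x, 0 < x → 0 < k x) (hγ : ∀ x, 0 < x → 0 < γ x)
    (ρ : ℝ) (n : ℤ) :
    thetaF k γ ρ n =
      k (2 * xi ρ n) / k (xi ρ n) / (γ (2 * (2 * xi ρ n)) / γ (2 * xi ρ n)) := by
  have hx := xi_pos ρ n
  have := hk _ hx
  have := hk (2 * xi ρ n) (by positivity)
  have := hγ (2 * xi ρ n) (by positivity)
  have := hγ (2 * (2 * xi ρ n)) (by positivity)
  rw [thetaF, zeta_eq, zeta_eq, xi_add_one]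
  field_simp

theorem two_rpow_mul_inv_zeta_eq (k γ : ℝ → ℝ) (ρ : ℝ) (n : ℤ) :
    (2 : ℝ) ^ ((n : ℝ) + ρ + 1) * (zeta k γ ρ n)⁻¹ =
      2 * xi ρ n ^ 2 * γ (2 * xi ρ n) / (Real.log 2 * k (xi ρ n)) := by
  rw [zeta_eq, inv_div, two_rpow_add_one_eq]
  ring

def massCoeff (k γ : ℝ → ℝ) (ρ : ℝ) (n : ℤ) : ℝ :=
  (2 : ℝ) ^ ((n : ℝ) + ρ + 1) * (zeta k γ ρ n)⁻¹ *
    Real.exp (-((2 : ℝ) ^ n *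
      ∑' m : ℕ, (2 : ℝ) ^ (-(n + 1 + (m : ℤ))) * Real.log (thetaF k γ ρ (n + (m : ℤ)))))

theorem two_rpow_mul_inv_zeta_mul_alphaF (k γ : ℝ → ℝ) (ρ A : ℝ) (n : ℤ) :
    (2 : ℝ) ^ ((n : ℝ) + ρ + 1) * (zeta k γ ρ n)⁻¹ * alphaF k γ ρ A n =
      massCoeff k γ ρ n * Real.exp (-(A * 2 ^ n)) := by
  unfold massCoeff alphaF
  ring

section MassCoeffBounds

variable {k γ : ℝ → ℝ} {p q ck Ck cγ Cγ : ℝ}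

theorem abs_log_thetaF_le (hp : 0 ≤ p) (hq : 0 ≤ q) (hck : 0 < ck) (hcγ : 0 < cγ)
    (hk : OnePlusRpowBounds k p ck Ck) (hγ : OnePlusRpowBounds γ q cγ Cγ) (ρ : ℝ) (n : ℤ) :
    |Real.log (thetaF k γ ρ n)| ≤ Real.log (2 ^ p * Ck / ck) + Real.log (2 ^ q * Cγ / cγ) := by
  have hx := xi_pos ρ n
  rw [thetaF_eq (fun x => hk.pos hck) (fun x => hγ.pos hcγ),
    Real.log_div (div_pos (hk.pos hck (by positivity)) (hk.pos hck hx)).ne'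
      (div_pos (hγ.pos hcγ (by positivity)) (hγ.pos hcγ (by positivity))).ne']
  exact (abs_sub _ _).trans (add_le_add (abs_log_div_le_of_onePlusRpowBounds hp hck hk hx)
    (abs_log_div_le_of_onePlusRpowBounds hq hcγ hγ (by positivity)))

theorem two_rpow_mul_inv_zeta_le (hq : 0 ≤ q) (hq2 : q ≤ 2) (hck : 0 < ck) (hcγ : 0 < cγ)
    (hk : OnePlusRpowBounds k p ck Ck) (hγ : OnePlusRpowBounds γ q cγ Cγ) {ρ : ℝ} (hρ : ρ ≤ 1)
    (n : ℤ) :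
    (2 : ℝ) ^ ((n : ℝ) + ρ + 1) * (zeta k γ ρ n)⁻¹ ≤
      128 * Cγ / (Real.log 2 * ck) * (((2 : ℝ) ^ n) ^ 2 + ((2 : ℝ) ^ n) ^ 4) := by
  have hx := xi_pos ρ n
  have hx2 : xi ρ n ≤ 2 * 2 ^ n := by
    rw [xi_eq_zpow_mul, mul_comm]
    gcongr
    simpa using Real.rpow_le_rpow_of_exponent_le one_le_two hρ
  rw [two_rpow_mul_inv_zeta_eq]
  generalize xi ρ n = x at hx hx2
  have hkx : ck ≤ k x := by nlinarith [(hk x hx).1, Real.rpow_pos_of_pos hx p]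
  have hγx : γ (2 * x) ≤ 4 * Cγ * (1 + x ^ 2) := by
    have := rpow_le_one_add_sq (by positivity : (0 : ℝ) ≤ 2 * x) hq hq2
    nlinarith [(hγ (2 * x) (by positivity)).2, hcγ.trans_le hγ.lower_le_upper]
  have hx4 : x ^ 2 + x ^ 4 ≤ 16 * (((2 : ℝ) ^ n) ^ 2 + ((2 : ℝ) ^ n) ^ 4) := by
    have h2 : x ^ 2 ≤ (2 * 2 ^ n) ^ 2 := by gcongr
    have h4 : x ^ 4 ≤ (2 * 2 ^ n) ^ 4 := by gcongr
    nlinarith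
  have hCγ := hcγ.trans_le hγ.lower_le_upper
  calc 2 * x ^ 2 * γ (2 * x) / (Real.log 2 * k x)
      ≤ 2 * x ^ 2 * (4 * Cγ * (1 + x ^ 2)) / (Real.log 2 * ck) := by
        have := (hγ.pos hcγ (by positivity : 0 < 2 * x)).le
        gcongr
    _ = 8 * Cγ / (Real.log 2 * ck) * (x ^ 2 + x ^ 4) := by ring
    _ ≤ 8 * Cγ / (Real.log 2 * ck) * (16 * (((2 : ℝ) ^ n) ^ 2 + ((2 : ℝ) ^ n) ^ 4)) := by
        gcongr
    _ = 128 * Cγ / (Real.log 2 * ck) * (((2 : ℝ) ^ n) ^ 2 + ((2 : ℝ) ^ n) ^ 4) := by ring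

theorem le_two_rpow_mul_inv_zeta (hp2 : p ≤ 2) (hck : 0 < ck) (hcγ : 0 < cγ)
    (hk : OnePlusRpowBounds k p ck Ck) (hγ : OnePlusRpowBounds γ q cγ Cγ) {ρ : ℝ} (hρ : 0 ≤ ρ)
    (n : ℕ) : cγ / (Real.log 2 * Ck) ≤ (2 : ℝ) ^ (((n : ℤ) : ℝ) + ρ + 1) * (zeta k γ ρ n)⁻¹ := by
  have hx1 : 1 ≤ xi ρ n := by
    rw [xi_eq_zpow_mul]
    exact one_le_mul_of_one_le_of_one_le (one_le_zpow₀ one_le_two (by positivity))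
      (Real.one_le_rpow one_le_two hρ)
  have hx := xi_pos ρ n
  rw [two_rpow_mul_inv_zeta_eq]
  generalize xi ρ n = x at hx hx1
  have hCk : 0 < Ck := hck.trans_le hk.lower_le_upper
  have hkx : k x ≤ 2 * Ck * x ^ 2 := by
    have hxp : x ^ p ≤ x ^ 2 := by
      simpa using Real.rpow_le_rpow_of_exponent_le hx1 hp2
    nlinarith [(hk x hx).2, one_le_pow₀ (n := 2) hx1]
  have hγx : cγ ≤ γ (2 * x) := by
    nlinarith [(hγ (2 * x) (by positivity)).1, Real.rpow_pos_of_pos (by positivity : 0 < 2 * x) q]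
  rw [div_le_div_iff₀ (by positivity) (mul_pos (Real.log_pos one_lt_two) (hk.pos hck hx))]
  calc cγ * (Real.log 2 * k x) ≤ cγ * (Real.log 2 * (2 * Ck * x ^ 2)) := by gcongr
    _ = 2 * x ^ 2 * cγ * (Real.log 2 * Ck) := by ring
    _ ≤ 2 * x ^ 2 * γ (2 * x) * (Real.log 2 * Ck) := by gcongr

theorem two_rpow_mul_inv_zeta_pos (hck : 0 < ck) (hcγ : 0 < cγ)
    (hk : OnePlusRpowBounds k p ck Ck) (hγ : OnePlusRpowBounds γ q cγ Cγ) (ρ : ℝ) (n : ℤ) :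
    0 < (2 : ℝ) ^ ((n : ℝ) + ρ + 1) * (zeta k γ ρ n)⁻¹ := by
  have hx := xi_pos ρ n
  have := hk.pos hck hx
  have := hγ.pos hcγ (by positivity : 0 < 2 * xi ρ n)
  have := Real.log_pos one_lt_two
  rw [two_rpow_mul_inv_zeta_eq]
  positivity

theorem massCoeff_pos (hck : 0 < ck) (hcγ : 0 < cγ) (hk : OnePlusRpowBounds k p ck Ck)
    (hγ : OnePlusRpowBounds γ q cγ Cγ) (ρ : ℝ) (n : ℤ) : 0 < massCoeff k γ ρ n :=
  mul_pos (two_rpow_mul_inv_zeta_pos hck hcγ hk hγ ρ n) (Real.exp_pos _)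

theorem exists_abs_two_zpow_mul_tsum_log_thetaF_le (hp : 0 ≤ p) (hq : 0 ≤ q) (hck : 0 < ck)
    (hcγ : 0 < cγ) (hk : OnePlusRpowBounds k p ck Ck) (hγ : OnePlusRpowBounds γ q cγ Cγ)
    (ρ : ℝ) : ∃ B, ∀ n : ℤ,
      |(2 : ℝ) ^ n * ∑' m : ℕ, (2 : ℝ) ^ (-(n + 1 + (m : ℤ))) *
        Real.log (thetaF k γ ρ (n + (m : ℤ)))| ≤ B :=
  ⟨_, fun n =>
    abs_two_zpow_mul_tsum_le (fun m => abs_log_thetaF_le hp hq hck hcγ hk hγ ρ (n + m)) n⟩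

theorem exists_massCoeff_le (hp : 0 ≤ p) (hq : 0 ≤ q) (hq2 : q ≤ 2) (hck : 0 < ck)
    (hcγ : 0 < cγ) (hk : OnePlusRpowBounds k p ck Ck) (hγ : OnePlusRpowBounds γ q cγ Cγ)
    {ρ : ℝ} (hρ : ρ ≤ 1) :
    ∃ K, ∀ n : ℤ, massCoeff k γ ρ n ≤ K * (((2 : ℝ) ^ n) ^ 2 + ((2 : ℝ) ^ n) ^ 4) := by
  obtain ⟨B, hB⟩ := exists_abs_two_zpow_mul_tsum_log_thetaF_le hp hq hck hcγ hk hγ ρ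
  refine ⟨128 * Cγ / (Real.log 2 * ck) * Real.exp B, fun n => ?_⟩
  have hexp := Real.exp_le_exp.2 ((neg_le_abs _).trans (hB n))
  have hW := two_rpow_mul_inv_zeta_le hq hq2 hck hcγ hk hγ hρ n
  calc massCoeff k γ ρ n
      ≤ 128 * Cγ / (Real.log 2 * ck) * (((2 : ℝ) ^ n) ^ 2 + ((2 : ℝ) ^ n) ^ 4) * Real.exp B :=
        mul_le_mul hW hexp (Real.exp_pos _).le
          ((two_rpow_mul_inv_zeta_pos hck hcγ hk hγ ρ n).le.trans hW)
    _ = _ := by ring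

theorem exists_pos_le_massCoeff (hp : 0 ≤ p) (hq : 0 ≤ q) (hp2 : p ≤ 2) (hck : 0 < ck)
    (hcγ : 0 < cγ) (hk : OnePlusRpowBounds k p ck Ck) (hγ : OnePlusRpowBounds γ q cγ Cγ)
    {ρ : ℝ} (hρ : 0 ≤ ρ) : ∃ c, 0 < c ∧ ∀ n : ℕ, c ≤ massCoeff k γ ρ n := by
  obtain ⟨B, hB⟩ := exists_abs_two_zpow_mul_tsum_log_thetaF_le hp hq hck hcγ hk hγ ρ
  have hCk : 0 < Ck := hck.trans_le hk.lower_le_upper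
  refine ⟨cγ / (Real.log 2 * Ck) * Real.exp (-B), by positivity, fun n => ?_⟩
  have hexp := Real.exp_le_exp.2 (neg_le_neg ((le_abs_self _).trans (hB n)))
  exact mul_le_mul (le_two_rpow_mul_inv_zeta hp2 hck hcγ hk hγ hρ n) hexp (Real.exp_pos _).le
    (two_rpow_mul_inv_zeta_pos hck hcγ hk hγ ρ n).le

theorem summable_massCoeff_mul_exp (hp : 0 ≤ p) (hq : 0 ≤ q) (hq2 : q ≤ 2) (hck : 0 < ck)
    (hcγ : 0 < cγ) (hk : OnePlusRpowBounds k p ck Ck) (hγ : OnePlusRpowBounds γ q cγ Cγ)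
    {ρ : ℝ} (hρ : ρ ≤ 1) {A : ℝ} (hA : 0 < A) :
    Summable fun n : ℤ => massCoeff k γ ρ n * Real.exp (-(A * 2 ^ n)) := by
  obtain ⟨K, hK⟩ := exists_massCoeff_le hp hq hq2 hck hcγ hk hγ hρ
  refine .of_nonneg_of_le (fun n => (mul_pos (massCoeff_pos hck hcγ hk hγ ρ n)
    (Real.exp_pos _)).le) (fun n => ?_) (((summable_two_zpow_pow_mul_exp_neg two_pos hA).add
      (summable_two_zpow_pow_mul_exp_neg four_pos hA)).mul_left K)
  calc massCoeff k γ ρ n * Real.exp (-(A * 2 ^ n))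
      ≤ K * (((2 : ℝ) ^ n) ^ 2 + ((2 : ℝ) ^ n) ^ 4) * Real.exp (-(A * 2 ^ n)) := by
        gcongr; exact hK n
    _ = _ := by ring

theorem not_summable_massCoeff (hp : 0 ≤ p) (hq : 0 ≤ q) (hp2 : p ≤ 2) (hck : 0 < ck)
    (hcγ : 0 < cγ) (hk : OnePlusRpowBounds k p ck Ck) (hγ : OnePlusRpowBounds γ q cγ Cγ)
    {ρ : ℝ} (hρ : 0 ≤ ρ) : ¬Summable (massCoeff k γ ρ) := fun hs => by
  obtain ⟨c, hc, hle⟩ := exists_pos_le_massCoeff hp hq hp2 hck hcγ hk hγ hρ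
  obtain ⟨n, hn⟩ := ((hs.comp_injective Nat.cast_injective).tendsto_atTop_zero.eventually
    (gt_mem_nhds hc)).exists
  exact (hle n).not_gt hn

end MassCoeffBounds

theorem stmt3_general
    (α β βb γ₀ : ℝ)
    (hα : α ∈ Set.Ioo (0:ℝ) 1) (hβ : β ∈ Set.Ioo (1:ℝ) 2)
    (hβb : 1 < βb) (hγ₀ : 0 < γ₀)
    (k γ : ℝ → ℝ)
    (hk_cont : ContinuousOn k (Set.Ici 0)) (hk_pos : ∀ ξ : ℝ, 0 ≤ ξ → 0 < k ξ)
    (hk_inf : Tendsto (fun ξ : ℝ => k ξ / ξ ^ (α + 1)) atTop (𝓝 1))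
    (hγ_cont : ContinuousOn γ (Set.Ioi 0)) (hγ_pos : ∀ ξ : ℝ, 0 < ξ → 0 < γ ξ)
    (hγ_inf : Tendsto (fun ξ : ℝ => γ ξ / ξ ^ β) atTop (𝓝 1))
    (hγ_0 : (fun ξ : ℝ => γ ξ - γ₀) =O[𝓝[>] 0] fun ξ : ℝ => ξ ^ βb)
    (ρ : ℝ) (hρ : ρ ∈ Set.Ico (0:ℝ) 1) :
    (∀ A : ℝ, 0 < A →
      Summable (fun n : ℤ => (2:ℝ) ^ ((n:ℝ) + ρ + 1) * (zeta k γ ρ n)⁻¹ * alphaF k γ ρ A n)) ∧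
    StrictAntiOn
      (fun A : ℝ => ∑' n : ℤ, (2:ℝ) ^ ((n:ℝ) + ρ + 1) * (zeta k γ ρ n)⁻¹ * alphaF k γ ρ A n)
      (Set.Ioi 0) ∧
    Tendsto
      (fun A : ℝ => ∑' n : ℤ, (2:ℝ) ^ ((n:ℝ) + ρ + 1) * (zeta k γ ρ n)⁻¹ * alphaF k γ ρ A n)
      atTop (𝓝 0) ∧
    Tendsto
      (fun A : ℝ => ∑' n : ℤ, (2:ℝ) ^ ((n:ℝ) + ρ + 1) * (zeta k γ ρ n)⁻¹ * alphaF k γ ρ A n)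
      (𝓝[>] 0) atTop ∧
    (∀ M : ℝ, 0 < M → ∃! A : ℝ, 0 < A ∧
      (∑' n : ℤ, (2:ℝ) ^ ((n:ℝ) + ρ + 1) * (zeta k γ ρ n)⁻¹ * alphaF k γ ρ A n) = M) := by
  have hp : 0 < α + 1 := by linarith [hα.1]
  have hq : 0 < β := by linarith [hβ.1]
  obtain ⟨ck, Ck, hck, hk⟩ := exists_onePlusRpowBounds hp (hk_pos 0 le_rfl)
    (hk_cont.mono Ioi_subset_Ici_self) (fun x hx => hk_pos x hx.le)
    ((hk_cont 0 self_mem_Ici).tendsto.mono_left (nhdsWithin_mono _ Ioi_subset_Ici_self)) hk_inf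
  obtain ⟨cγ, Cγ, hcγ, hγ⟩ := exists_onePlusRpowBounds hq hγ₀ hγ_cont hγ_pos
    (by simpa using (hγ_0.trans_tendsto (tendsto_rpow_nhdsGT_zero (by linarith))).add_const γ₀)
    hγ_inf
  have hs := fun A (hA : 0 < A) => summable_massCoeff_mul_exp hp.le hq.le hβ.2.le hck hcγ hk hγ
    hρ.2.le hA
  have hpos := massCoeff_pos hck hcγ hk hγ ρ
  have hanti := expSum_strictAntiOn (fun n => (hpos n).le) (fun n => zpow_pos two_pos n)
    ⟨0, hpos 0⟩ hs
  have h0 := tendsto_expSum_nhdsGT_zero (fun n => (hpos n).le)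
    (not_summable_massCoeff hp.le hq.le (by linarith [hα.2]) hck hcγ hk hγ hρ.1) hs
  have htop := tendsto_expSum_atTop (fun n => (hpos n).le) (fun n => zpow_pos two_pos n) hs
  have hcont := expSum_continuousOn (fun n => (hpos n).le) (fun n => (zpow_pos two_pos n).le) hs
  simp only [two_rpow_mul_inv_zeta_mul_alphaF]
  exact ⟨hs, hanti, htop, h0,
    fun M hM => existsUnique_pos_eq_of_strictAntiOn hanti hcont h0 htop hM⟩

/-- The mass function `M(A) = Σ_{n∈ℤ} 2^{n+ρ+1} ζ_{n,ρ}⁻¹ α_n(A,ρ)` is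
well-defined for `A > 0`, strictly decreasing on `(0,∞)`, tends to `0` at `∞` and to `∞` at `0⁺`;
hence for each `M > 0` there is a unique `A_M > 0` with `M(A_M) = M`. -/
theorem stmt3
    (α β αb βb k₀ γ₀ : ℝ)
    (hα : α ∈ Set.Ioo (0:ℝ) 1) (hβ : β ∈ Set.Ioo (1:ℝ) 2)
    (hαb : 1 < αb) (hβb : 1 < βb) (hk₀ : 0 < k₀) (hγ₀ : 0 < γ₀)
    (k γ : ℝ → ℝ)
    (hk_cont : ContinuousOn k (Set.Ici 0)) (hk_pos : ∀ ξ : ℝ, 0 ≤ ξ → 0 < k ξ)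
    (hk_inf : Tendsto (fun ξ : ℝ => k ξ / ξ ^ (α + 1)) atTop (𝓝 1))
    (hk_0 : (fun ξ : ℝ => k ξ - k₀) =O[𝓝[>] 0] fun ξ : ℝ => ξ ^ αb)
    (hγ_cont : ContinuousOn γ (Set.Ioi 0)) (hγ_pos : ∀ ξ : ℝ, 0 < ξ → 0 < γ ξ)
    (hγ_inf : Tendsto (fun ξ : ℝ => γ ξ / ξ ^ β) atTop (𝓝 1))
    (hγ_0 : (fun ξ : ℝ => γ ξ - γ₀) =O[𝓝[>] 0] fun ξ : ℝ => ξ ^ βb)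
    (ρ : ℝ) (hρ : ρ ∈ Set.Ico (0:ℝ) 1) :
    (∀ A : ℝ, 0 < A →
      Summable (fun n : ℤ => (2:ℝ) ^ ((n:ℝ) + ρ + 1) * (zeta k γ ρ n)⁻¹ * alphaF k γ ρ A n)) ∧
    StrictAntiOn
      (fun A : ℝ => ∑' n : ℤ, (2:ℝ) ^ ((n:ℝ) + ρ + 1) * (zeta k γ ρ n)⁻¹ * alphaF k γ ρ A n)
      (Set.Ioi 0) ∧
    Tendsto
      (fun A : ℝ => ∑' n : ℤ, (2:ℝ) ^ ((n:ℝ) + ρ + 1) * (zeta k γ ρ n)⁻¹ * alphaF k γ ρ A n)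
      atTop (𝓝 0) ∧
    Tendsto
      (fun A : ℝ => ∑' n : ℤ, (2:ℝ) ^ ((n:ℝ) + ρ + 1) * (zeta k γ ρ n)⁻¹ * alphaF k γ ρ A n)
      (𝓝[>] 0) atTop ∧
    (∀ M : ℝ, 0 < M → ∃! A : ℝ, 0 < A ∧
      (∑' n : ℤ, (2:ℝ) ^ ((n:ℝ) + ρ + 1) * (zeta k γ ρ n)⁻¹ * alphaF k γ ρ A n) = M) :=
  stmt3_general α β βb γ₀ hα hβ hβb hγ₀ k γ hk_cont hk_pos hk_inf hγ_cont hγ_pos hγ_inf hγ_0 ρ hρ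
end
end

section
/- Writing a_n := a_n(A_M), there exists a constant c₀ > 0, depending only on M (and on the kernels k, γ), such that for every real sequence (y_n)_{n∈ℤ} with Σ_{n∈ℤ} 2^{2n} a_n y_n² < ∞, setting ȳ := (Σ_{n∈ℤ} 2^{2n} a_n y_n)/(Σ_{n∈ℤ} 2^{2n} a_n), one has the weighted discrete Poincaré inequality Σ_{n∈ℤ} 2^{2n} a_n (y_n − ȳ)² ≤ c₀ · Σ_{n∈ℤ} 2^{2n} γ(2^{n+1}) a_{n+1} (y_{n+1} − y_n)². -/
open Filter Topology Asymptotics MeasureTheory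

noncomputable section

/-!
Write `W n = 4ⁿ aₙ` and `V n = 4ⁿ γ(2ⁿ⁺¹) aₙ₊₁`. Since `|ln θₙ|` is bounded,
`αₙ = exp(-A 2ⁿ + O(1))`, so the power-type behaviour of `k` and `γ` at `0` and `∞` gives
`W n ≍ V n ≍ 8ⁿ` as `n → -∞`, while for large `n` the weight `V` at least halves at each step and
`W n / V (n - 1) = 4 / γ(2ⁿ)` is summable. The weighted mean minimises `c ↦ Σ W n (y n - c)²`, so
it suffices to bound `Σ W n (y n - y 0)²`. On each side of `0` this is a discrete Hardy inequality:
Cauchy–Schwarz along `y n - y 0 = Σ (y (j + 1) - y j)` with weights `ρ j / V j`, then an exchange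
of summations, with `ρ ≡ 1` for `n ≥ 0` (where `Σ_{j<n} 1 / V j ≲ 1 / V (n - 1)` by the halving)
and `ρ` geometric for `n ≤ 0`.
-/

open Finset Real

section WeightedMean

variable {ι : Type*} {w y : ι → ℝ}

theorem summable_mul_of_summable_mul_sq (hw : ∀ i, 0 ≤ w i) (hws : Summable w)
    (hy : Summable fun i => w i * y i ^ 2) : Summable fun i => w i * y i := by
  refine ((hws.add hy).div_const 2).of_norm_bounded fun i => ?_
  rw [Real.norm_eq_abs, abs_mul, abs_of_nonneg (hw i)]
  nlinarith [hw i, sq_nonneg (|y i| - 1), sq_abs (y i)]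

theorem hasSum_mul_sub_sq (hw : ∀ i, 0 ≤ w i) (hws : Summable w)
    (hy : Summable fun i => w i * y i ^ 2) (c : ℝ) :
    HasSum (fun i => w i * (y i - c) ^ 2)
      ((∑' i, w i * y i ^ 2) - 2 * c * (∑' i, w i * y i) + c ^ 2 * ∑' i, w i) := by
  refine ((hy.hasSum.sub ((summable_mul_of_summable_mul_sq hw hws hy).hasSum.mul_left
    (2 * c))).add (hws.hasSum.mul_left (c ^ 2))).congr_fun fun i => ?_
  ring

theorem tsum_mul_sub_mean_sq_le (hw : ∀ i, 0 ≤ w i) (hws : Summable w)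
    (hS : 0 < ∑' i, w i) (hy : Summable fun i => w i * y i ^ 2) (c : ℝ) :
    ∑' i, w i * (y i - (∑' j, w j * y j) / ∑' j, w j) ^ 2 ≤ ∑' i, w i * (y i - c) ^ 2 := by
  rw [(hasSum_mul_sub_sq hw hws hy _).tsum_eq, (hasSum_mul_sub_sq hw hws hy c).tsum_eq]
  set S := ∑' j, w j
  set P := ∑' j, w j * y j
  have hgap : c ^ 2 * S - 2 * c * P - ((P / S) ^ 2 * S - 2 * (P / S) * P) =
      (c * S - P) ^ 2 / S := by
    field_simp; ring
  linarith [div_nonneg (sq_nonneg (c * S - P)) hS.le]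

end WeightedMean

section Hardy

theorem geom_sum_le_of_one_lt {q : ℝ} (hq : 1 < q) (m : ℕ) :
    ∑ j ∈ range m, q ^ j ≤ q ^ m / (q - 1) := by
  rw [geom_sum_eq hq.ne', div_le_div_iff_of_pos_right (by linarith)]
  linarith

theorem ENNReal.tsum_ite_lt_eq_tsum_add (F : ℕ → ENNReal) (i : ℕ) :
    ∑' m, (if i < m then F m else 0) = ∑' m, F (m + i + 1) := by
  rw [← ENNReal.summable.sum_add_tsum_nat_add' (k := i + 1)]
  simp only [add_assoc]
  rw [sum_eq_zero fun m hm => if_neg (by simpa [Nat.lt_succ_iff, not_lt] using hm), zero_add]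
  exact tsum_congr fun m => if_pos (by omega)

theorem ENNReal.tsum_ofReal_le_of_hasSum {ι : Type*} {f g : ι → ℝ} {a : ℝ}
    (hf : ∀ i, 0 ≤ f i) (hfg : ∀ i, f i ≤ g i) (hg : HasSum g a) :
    ∑' i, ENNReal.ofReal (f i) ≤ ENNReal.ofReal a := by
  calc ∑' i, ENNReal.ofReal (f i) ≤ ∑' i, ENNReal.ofReal (g i) :=
        ENNReal.tsum_le_tsum fun i => ENNReal.ofReal_le_ofReal (hfg i)
    _ = ENNReal.ofReal a := by
        rw [← ENNReal.ofReal_tsum_of_nonneg (fun i => (hf i).trans (hfg i)) hg.summable,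
          hg.tsum_eq]

theorem sq_sub_le_sum_inv_mul_sum (z w : ℕ → ℝ) (hw : ∀ i, 0 < w i) (m : ℕ) :
    (z m - z 0) ^ 2 ≤
      (∑ i ∈ range m, (w i)⁻¹) * ∑ i ∈ range m, w i * (z (i + 1) - z i) ^ 2 := by
  rw [← sum_range_sub]
  refine sum_sq_le_sum_mul_sum_of_sq_le_mul _ (fun i _ => (inv_pos.2 (hw i)).le)
    (fun i _ => mul_nonneg (hw i).le (sq_nonneg _)) fun i _ => ?_
  rw [← mul_assoc, inv_mul_cancel₀ (hw i).ne', one_mul]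

theorem hardy_nat {W V ρ : ℕ → ℝ} (hW : ∀ m, 0 ≤ W m) (hV : ∀ i, 0 < V i) (hρ : ∀ i, 0 < ρ i)
    {K : ℝ} (hK : ∀ i, ∑' m, ENNReal.ofReal
      (W (m + i + 1) * ∑ j ∈ range (m + i + 1), ρ j / V j) ≤ ENNReal.ofReal (K * ρ i))
    (z : ℕ → ℝ) :
    ∑' m, ENNReal.ofReal (W m * (z m - z 0) ^ 2) ≤
      ENNReal.ofReal K * ∑' i, ENNReal.ofReal (V i * (z (i + 1) - z i) ^ 2) := by
  set P : ℕ → ℝ := fun m => ∑ j ∈ range m, ρ j / V j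
  set e : ℕ → ENNReal := fun i => ENNReal.ofReal (V i / ρ i * (z (i + 1) - z i) ^ 2)
  have hP : ∀ m, 0 ≤ P m := fun m => sum_nonneg fun j _ => (div_pos (hρ j) (hV j)).le
  have hpoint : ∀ m, ENNReal.ofReal (W m * (z m - z 0) ^ 2) ≤
      ∑' i, if i < m then ENNReal.ofReal (W m * P m) * e i else 0 := by
    intro m
    have hcs := sq_sub_le_sum_inv_mul_sum z (fun i => V i / ρ i)
      (fun i => div_pos (hV i) (hρ i)) m
    simp only [inv_div] at hcs
    calc ENNReal.ofReal (W m * (z m - z 0) ^ 2)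
        ≤ ENNReal.ofReal (W m * P m * ∑ i ∈ range m, V i / ρ i * (z (i + 1) - z i) ^ 2) := by
          rw [mul_assoc]; exact ENNReal.ofReal_le_ofReal (mul_le_mul_of_nonneg_left hcs (hW m))
      _ = ∑ i ∈ range m, ENNReal.ofReal (W m * P m) * e i := by
          rw [ENNReal.ofReal_mul (mul_nonneg (hW m) (hP m)), ENNReal.ofReal_sum_of_nonneg
            fun i _ => mul_nonneg (div_pos (hV i) (hρ i)).le (sq_nonneg _), mul_sum]
      _ = _ := by
          rw [tsum_eq_sum (s := range m) fun i hi => if_neg (by simpa using hi)]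
          exact sum_congr rfl fun i hi => (if_pos (by simpa using hi)).symm
  calc ∑' m, ENNReal.ofReal (W m * (z m - z 0) ^ 2)
      ≤ ∑' m, ∑' i, if i < m then ENNReal.ofReal (W m * P m) * e i else 0 :=
        ENNReal.tsum_le_tsum hpoint
    _ = ∑' i, e i * ∑' m, ENNReal.ofReal (W (m + i + 1) * P (m + i + 1)) := by
        rw [ENNReal.tsum_comm]
        refine tsum_congr fun i => ?_
        rw [ENNReal.tsum_ite_lt_eq_tsum_add (fun m => ENNReal.ofReal (W m * P m) * e i),
          ← ENNReal.tsum_mul_left]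
        simp only [mul_comm]
    _ ≤ ∑' i, e i * ENNReal.ofReal (K * ρ i) :=
        ENNReal.tsum_le_tsum fun i => by gcongr; exact hK i
    _ = ENNReal.ofReal K * ∑' i, ENNReal.ofReal (V i * (z (i + 1) - z i) ^ 2) := by
        rw [← ENNReal.tsum_mul_left]
        refine tsum_congr fun i => ?_
        have hd := sq_nonneg (z (i + 1) - z i)
        rw [← ENNReal.ofReal_mul (mul_nonneg (div_pos (hV i) (hρ i)).le hd),
          ← ENNReal.ofReal_mul' (mul_nonneg (hV i).le hd)]
        congr 1
        field_simp [(hρ i).ne']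

theorem hardy_nat_of_summable {W V : ℕ → ℝ} (hW : ∀ m, 0 ≤ W m) (hV : ∀ i, 0 < V i)
    (hb : Summable fun m => W m * ∑ j ∈ range m, (V j)⁻¹) (z : ℕ → ℝ) :
    ∑' m, ENNReal.ofReal (W m * (z m - z 0) ^ 2) ≤
      ENNReal.ofReal (∑' m, W m * ∑ j ∈ range m, (V j)⁻¹) *
        ∑' i, ENNReal.ofReal (V i * (z (i + 1) - z i) ^ 2) := by
  have hb0 : ∀ m, 0 ≤ W m * ∑ j ∈ range m, (V j)⁻¹ :=
    fun m => mul_nonneg (hW m) (sum_nonneg fun j _ => (inv_pos.2 (hV j)).le)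
  refine hardy_nat (ρ := 1) hW hV (fun _ => one_pos) (fun i => ?_) z
  simp only [Pi.one_apply, one_div, mul_one]
  calc ∑' m, ENNReal.ofReal (W (m + i + 1) * ∑ j ∈ range (m + i + 1), (V j)⁻¹)
      ≤ ∑' m, ENNReal.ofReal (W m * ∑ j ∈ range m, (V j)⁻¹) :=
        ENNReal.tsum_comp_le_tsum_of_injective (add_left_injective (i + 1)) _
    _ = _ := (ENNReal.ofReal_tsum_of_nonneg hb0 hb).symm

theorem hardy_nat_of_geometric {W V : ℕ → ℝ} {x Cw cv : ℝ} (hx0 : 0 < x) (hx1 : x < 1)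
    (hcv : 0 < cv) (hW : ∀ m, 0 ≤ W m) (hV : ∀ i, 0 < V i)
    (hWx : ∀ m, W m ≤ Cw * x ^ m) (hVx : ∀ i, cv * x ^ i ≤ V i) (z : ℕ → ℝ) :
    ∑' m, ENNReal.ofReal (W m * (z m - z 0) ^ 2) ≤
      ENNReal.ofReal (Cw * x / (cv * (1 - √x) ^ 2)) *
        ∑' i, ENNReal.ofReal (V i * (z (i + 1) - z i) ^ 2) := by
  set t := √x
  have ht0 : 0 < t := Real.sqrt_pos.2 hx0
  have ht1 : t < 1 := (Real.sqrt_lt' one_pos).2 (by simpa using hx1)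
  have htx : x = t ^ 2 := (Real.sq_sqrt hx0.le).symm
  set c := Cw * t / (cv * (1 - t))
  -- Cauchy–Schwarz weights `ρ j = tʲ`; any rate strictly between `x` and `1` would do
  have hP : ∀ m, W m * ∑ j ∈ range m, t ^ j / V j ≤ c * t ^ m := by
    intro m
    have hterm : ∀ j ∈ range m, t ^ j / V j ≤ cv⁻¹ * t⁻¹ ^ j := fun j _ => by
      rw [div_le_iff₀ (hV j), inv_pow]
      calc t ^ j = cv⁻¹ * (t ^ j)⁻¹ * (cv * t ^ (2 * j)) := by
            field_simp; ring
        _ ≤ cv⁻¹ * (t ^ j)⁻¹ * V j := by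
            gcongr; simpa [htx, ← pow_mul] using hVx j
    have hsum : ∑ j ∈ range m, t ^ j / V j ≤ cv⁻¹ * (t⁻¹ ^ m / (t⁻¹ - 1)) :=
      (sum_le_sum hterm).trans_eq (mul_sum ..).symm |>.trans <|
        mul_le_mul_of_nonneg_left (geom_sum_le_of_one_lt ((one_lt_inv₀ ht0).2 ht1) m)
          (inv_nonneg.2 hcv.le)
    calc W m * ∑ j ∈ range m, t ^ j / V j ≤ Cw * x ^ m * (cv⁻¹ * (t⁻¹ ^ m / (t⁻¹ - 1))) :=
          mul_le_mul (hWx m) hsum (sum_nonneg fun j _ => div_nonneg (by positivity) (hV j).le)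
            ((hW m).trans (hWx m))
      _ = c * t ^ m := by
          rw [htx, ← pow_mul, inv_pow]
          simp only [c]
          field_simp
          ring
  refine hardy_nat hW hV (fun i => pow_pos ht0 i) (fun i => ?_) z
  refine ENNReal.tsum_ofReal_le_of_hasSum
    (fun m => mul_nonneg (hW _) (sum_nonneg fun j _ => div_nonneg (by positivity) (hV j).le))
    (fun m => hP (m + i + 1)) ?_
  have hK : Cw * x / (cv * (1 - t) ^ 2) * t ^ i = c * t ^ (i + 1) * (1 - t)⁻¹ := by
    simp only [c]; rw [htx]; field_simp; ring
  have hfun : (fun m : ℕ => c * t ^ (m + i + 1)) = fun m => c * t ^ (i + 1) * t ^ m :=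
    funext fun m => by ring
  rw [hK, hfun]
  exact (hasSum_geometric_of_lt_one ht0.le ht1).mul_left _

theorem exists_hardy_int {W V : ℤ → ℝ} (hW : ∀ n, 0 ≤ W n) (hV : ∀ n, 0 < V n) {r Cw cv : ℝ}
    (hr : 1 < r) (hcv : 0 < cv) (hW_neg : ∀ n ≤ 0, W n ≤ Cw * r ^ n)
    (hV_neg : ∀ n ≤ 0, cv * r ^ n ≤ V n)
    (hb : Summable fun m : ℕ => W m * ∑ j ∈ range m, (V j)⁻¹) :
    ∃ c₀ > 0, ∀ y : ℤ → ℝ, ∑' n, ENNReal.ofReal (W n * (y n - y 0) ^ 2) ≤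
      ENNReal.ofReal c₀ * ∑' n, ENNReal.ofReal (V n * (y (n + 1) - y n) ^ 2) := by
  have hr0 : 0 < r := one_pos.trans hr
  set Kp := ∑' m : ℕ, W m * ∑ j ∈ range m, (V j)⁻¹
  set Kn := Cw * r⁻¹ / (cv * r⁻¹ * (1 - √r⁻¹) ^ 2)
  have hKp : 0 ≤ Kp :=
    tsum_nonneg fun m => mul_nonneg (hW m) (sum_nonneg fun j _ => (inv_pos.2 (hV j)).le)
  refine ⟨max Kp Kn + 1, by positivity, fun y => ?_⟩
  have hpos := hardy_nat_of_summable (fun m => hW m) (fun i => hV i) hb (fun m => y m)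
  -- the side `n ≤ 0`, read backwards from `0`
  have hneg := hardy_nat_of_geometric (W := fun m => W (-m)) (V := fun i => V (-(i + 1)))
    (inv_pos.2 hr0) (inv_lt_one_of_one_lt₀ hr) (mul_pos hcv (inv_pos.2 hr0))
    (fun m => hW _) (fun i => hV _)
    (fun m => by simpa [zpow_neg, inv_pow] using hW_neg (-m) (by omega))
    (fun i => by
      have hri : r ^ (-((i : ℤ) + 1)) = r⁻¹ * r⁻¹ ^ i := by
        rw [zpow_neg, ← Nat.cast_succ, zpow_natCast, inv_pow, pow_succ, mul_inv, mul_comm]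
      have := hV_neg (-(i + 1)) (by omega)
      rwa [hri, ← mul_assoc] at this)
    (fun m => y (-m))
  simp only [Nat.cast_add, Nat.cast_one, Nat.cast_zero, neg_zero] at hpos hneg
  set F : ℤ → ENNReal := fun n => ENNReal.ofReal (W n * (y n - y 0) ^ 2)
  set D : ℤ → ENNReal := fun n => ENNReal.ofReal (V n * (y (n + 1) - y n) ^ 2)
  have hD : ∀ i : ℕ,
      ENNReal.ofReal (V (-(i + 1)) * (y (-(i + 1)) - y (-i)) ^ 2) = D (-(i + 1)) :=
    fun i => by simp only [D]; ring_nf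
  simp only [hD] at hneg
  have hFneg : ∑' m : ℕ, F (-(m + 1)) ≤ ∑' m : ℕ, F (-m) := by
    simpa using
      ENNReal.tsum_comp_le_tsum_of_injective (add_left_injective 1) (fun m : ℕ => F (-m))
  calc ∑' n, F n = ∑' m : ℕ, F m + ∑' m : ℕ, F (-(m + 1)) :=
        tsum_of_nat_of_neg_add_one ENNReal.summable ENNReal.summable
    _ ≤ ENNReal.ofReal Kp * ∑' m : ℕ, D m + ENNReal.ofReal Kn * ∑' m : ℕ, D (-(m + 1)) :=
        add_le_add hpos (hFneg.trans hneg)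
    _ ≤ ENNReal.ofReal (max Kp Kn + 1) * (∑' m : ℕ, D m + ∑' m : ℕ, D (-(m + 1))) := by
        rw [mul_add]
        gcongr <;> linarith [le_max_left Kp Kn, le_max_right Kp Kn]
    _ = _ := by rw [← tsum_of_nat_of_neg_add_one ENNReal.summable ENNReal.summable]

theorem summable_of_summable_mul_sum_inv {W V : ℤ → ℝ} (hW : ∀ n, 0 ≤ W n)
    (hV : ∀ n, 0 < V n) {r Cw : ℝ} (hr : 1 < r) (hW_neg : ∀ n ≤ 0, W n ≤ Cw * r ^ n)
    (hb : Summable fun m : ℕ => W m * ∑ j ∈ range m, (V j)⁻¹) : Summable W := by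
  have hr0 : 0 < r := one_pos.trans hr
  refine Summable.of_nat_of_neg_add_one ?_ ?_
  · refine (summable_nat_add_iff 1).1 <|
      (((summable_nat_add_iff 1).2 hb).mul_left (V 0)).of_nonneg_of_le (fun m => hW _)
        fun m => ?_
    have h0 : (V 0)⁻¹ ≤ ∑ j ∈ range (m + 1), (V j)⁻¹ :=
      single_le_sum (f := fun j : ℕ => (V j)⁻¹) (fun j _ => (inv_pos.2 (hV j)).le) (by simp)
    calc W ↑(m + 1) = V 0 * (W ↑(m + 1) * (V 0)⁻¹) := by field_simp [(hV 0).ne']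
      _ ≤ V 0 * (W ↑(m + 1) * ∑ j ∈ range (m + 1), (V j)⁻¹) :=
          mul_le_mul_of_nonneg_left (mul_le_mul_of_nonneg_left h0 (hW _)) (hV 0).le
  · refine (((summable_nat_add_iff 1).2 <| summable_geometric_of_lt_one (inv_pos.2 hr0).le
      (inv_lt_one_of_one_lt₀ hr)).mul_left Cw).of_nonneg_of_le (fun m => hW _) fun m => ?_
    have := hW_neg (-(m + 1)) (by omega)
    rwa [← Nat.cast_succ, zpow_neg, zpow_natCast, ← inv_pow] at this

theorem sum_range_succ_inv_le_of_halving {V : ℕ → ℝ} (hV : ∀ n, 0 < V n) {J : ℕ}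
    (hhalf : ∀ n ≥ J, V (n + 1) ≤ V n / 2) :
    ∀ n ≥ J, ∑ j ∈ range (n + 1), (V j)⁻¹ ≤
      (2 + V J * ∑ j ∈ range J, (V j)⁻¹) * (V n)⁻¹ := by
  have hS : 0 ≤ ∑ j ∈ range J, (V j)⁻¹ := sum_nonneg fun j _ => (inv_pos.2 (hV j)).le
  intro n hn
  induction n, hn using Nat.le_induction with
  | base =>
    rw [sum_range_succ, add_mul, mul_assoc, mul_comm (V J), mul_assoc,
      inv_mul_cancel₀ (hV J).ne']
    have := inv_pos.2 (hV J)
    linarith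
  | succ n hn ih =>
    have hinv : 2 * (V n)⁻¹ ≤ (V (n + 1))⁻¹ := by
      rw [← div_eq_mul_inv, div_le_iff₀ (hV n), ← div_eq_inv_mul, le_div_iff₀ (hV _)]
      linarith [hhalf n hn]
    rw [sum_range_succ]
    nlinarith [inv_pos.2 (hV n), inv_pos.2 (hV (n + 1)), mul_nonneg (hV J).le hS]

theorem summable_mul_sum_inv_of_halving {W V : ℕ → ℝ} (hW : ∀ n, 0 ≤ W n) (hV : ∀ n, 0 < V n)
    (hhalf : ∀ᶠ n in atTop, V (n + 1) ≤ V n / 2) (hWV : Summable fun n => W (n + 1) / V n) :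
    Summable fun n => W n * ∑ j ∈ range n, (V j)⁻¹ := by
  obtain ⟨J, hJ⟩ := hhalf.exists_forall_of_atTop
  refine (summable_nat_add_iff 1).1 <| (hWV.mul_left (2 + V J * ∑ j ∈ range J, (V j)⁻¹))
    |>.of_norm_bounded_eventually_nat ?_
  filter_upwards [eventually_ge_atTop J] with n hn
  rw [Real.norm_eq_abs, abs_of_nonneg (mul_nonneg (hW _)
    (sum_nonneg fun j _ => (inv_pos.2 (hV j)).le)), div_eq_mul_inv, mul_left_comm]
  exact mul_le_mul_of_nonneg_left (sum_range_succ_inv_le_of_halving hV hJ n hn) (hW _)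

theorem exists_weighted_poincare {W V : ℤ → ℝ} (hW : ∀ n, 0 < W n) (hV : ∀ n, 0 < V n)
    {r Cw cv : ℝ} (hr : 1 < r) (hcv : 0 < cv) (hW_neg : ∀ n ≤ 0, W n ≤ Cw * r ^ n)
    (hV_neg : ∀ n ≤ 0, cv * r ^ n ≤ V n)
    (hb : Summable fun m : ℕ => W m * ∑ j ∈ range m, (V j)⁻¹) :
    ∃ c₀ > 0, ∀ y : ℤ → ℝ, Summable (fun n => W n * y n ^ 2) →
      ∑' n, ENNReal.ofReal (W n * (y n - (∑' m, W m * y m) / ∑' m, W m) ^ 2) ≤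
        ENNReal.ofReal c₀ * ∑' n, ENNReal.ofReal (V n * (y (n + 1) - y n) ^ 2) := by
  have hW0 : ∀ n, 0 ≤ W n := fun n => (hW n).le
  obtain ⟨c₀, hc₀, hardy⟩ := exists_hardy_int hW0 hV hr hcv hW_neg hV_neg hb
  have hWs := summable_of_summable_mul_sum_inv hW0 hV hr hW_neg hb
  refine ⟨c₀, hc₀, fun y hy => le_trans ?_ (hardy y)⟩
  rw [← ENNReal.ofReal_tsum_of_nonneg (fun n => mul_nonneg (hW0 n) (sq_nonneg _))
      (hasSum_mul_sub_sq hW0 hWs hy _).summable,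
    ← ENNReal.ofReal_tsum_of_nonneg (fun n => mul_nonneg (hW0 n) (sq_nonneg _))
      (hasSum_mul_sub_sq hW0 hWs hy _).summable]
  exact ENNReal.ofReal_le_ofReal
    (tsum_mul_sub_mean_sq_le hW0 hWs (hWs.tsum_pos hW0 0 (hW 0)) hy _)

end Hardy

section Dyadic

theorem Int.exists_abs_le_of_tendsto {u : ℤ → ℝ} {a b : ℝ} (hbot : Tendsto u atBot (𝓝 a))
    (htop : Tendsto u atTop (𝓝 b)) : ∃ B, ∀ n, |u n| ≤ B := by
  have h : IsBoundedUnder (· ≤ ·) cofinite fun n => |u n| := by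
    rw [Int.cofinite_eq, IsBoundedUnder, map_sup]
    exact isBounded_sup hbot.abs.isBoundedUnder_le htop.abs.isBoundedUnder_le
  obtain ⟨B, hB⟩ := h.bddAbove_range_of_cofinite
  exact ⟨B, fun n => hB ⟨n, rfl⟩⟩

theorem Int.exists_abs_le_of_tendsto_atBot {u : ℤ → ℝ} {a : ℝ} (h : Tendsto u atBot (𝓝 a))
    (N : ℤ) : ∃ B, ∀ n ≤ N, |u n| ≤ B := by
  obtain ⟨B, hB⟩ := Int.exists_abs_le_of_tendsto (u := fun n => u (min n N))
    (h.congr' <| (eventually_le_atBot N).mono fun n hn => by simp [min_eq_left hn])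
    ((tendsto_const_nhds (x := u N)).congr' <| (eventually_ge_atTop N).mono fun n hn => by
      simp [min_eq_right hn])
  exact ⟨B, fun n hn => by simpa [min_eq_left hn] using hB n⟩

theorem tendsto_two_zpow_atTop : Tendsto (fun n : ℤ => (2 : ℝ) ^ n) atTop atTop := by
  refine ((tendsto_rpow_atTop_of_base_gt_one 2 one_lt_two).comp
    tendsto_intCast_atTop_atTop).congr fun n => ?_
  simp [Real.rpow_intCast]

theorem tendsto_two_zpow_atBot : Tendsto (fun n : ℤ => (2 : ℝ) ^ n) atBot (𝓝[>] 0) := by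
  refine tendsto_nhdsWithin_iff.2
    ⟨?_, Eventually.of_forall fun n => Set.mem_Ioi.2 (zpow_pos two_pos n)⟩
  refine ((tendsto_rpow_atBot_of_base_gt_one 2 one_lt_two).comp
    (tendsto_intCast_atBot_iff.2 tendsto_id)).congr fun n => ?_
  simp [Real.rpow_intCast]

theorem tendsto_nhdsGT_of_isBigO_rpow {f : ℝ → ℝ} {L q : ℝ} (hq : 0 < q)
    (h : (fun ξ => f ξ - L) =O[𝓝[>] 0] fun ξ => ξ ^ q) : Tendsto f (𝓝[>] 0) (𝓝 L) := by
  have h0 : Tendsto (fun ξ : ℝ => ξ ^ q) (𝓝[>] 0) (𝓝 0) := by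
    simpa [Real.zero_rpow hq.ne'] using
      (Real.continuousAt_rpow_const 0 q (Or.inr hq.le)).tendsto.mono_left nhdsWithin_le_nhds
  exact tendsto_sub_nhds_zero_iff.1 (h.trans_tendsto h0)

structure DyadicRegular (f : ℝ → ℝ) : Prop where
  pos : ∀ n : ℤ, 0 < f (2 ^ n)
  log_increment_bdd : ∃ B, ∀ n : ℤ, |log (f (2 ^ (n + 1))) - log (f (2 ^ n))| ≤ B
  log_bdd_of_le : ∀ N : ℤ, ∃ B, ∀ n ≤ N, |log (f (2 ^ n))| ≤ B

variable {f : ℝ → ℝ} {p L : ℝ}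

theorem tendsto_log_dyadic_atBot (hL : 0 < L) (h0 : Tendsto f (𝓝[>] 0) (𝓝 L)) :
    Tendsto (fun n : ℤ => log (f (2 ^ n))) atBot (𝓝 (log L)) :=
  ((continuousAt_log hL.ne').tendsto.comp h0).comp tendsto_two_zpow_atBot

theorem tendsto_log_dyadic_increment_atTop (hf : ∀ ξ, 0 < ξ → 0 < f ξ)
    (hinf : Tendsto (fun ξ => f ξ / ξ ^ p) atTop (𝓝 1)) :
    Tendsto (fun n : ℤ => log (f (2 ^ (n + 1))) - log (f (2 ^ n))) atTop (𝓝 (p * log 2)) := by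
  set u : ℤ → ℝ := fun n => log (f (2 ^ n) / ((2 : ℝ) ^ n) ^ p)
  have hu : Tendsto u atTop (𝓝 0) := by
    simpa [u, Function.comp_def] using
      ((continuousAt_log one_ne_zero).tendsto.comp hinf).comp tendsto_two_zpow_atTop
  have hlim := ((hu.comp (tendsto_atTop_add_const_right _ 1 tendsto_id)).sub hu).add_const
    (p * log 2)
  rw [sub_zero, zero_add] at hlim
  refine hlim.congr fun n => ?_
  have h2 : ∀ m : ℤ, 0 < (2 : ℝ) ^ m := fun m => zpow_pos two_pos m
  simp only [u, Function.comp, id]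
  rw [log_div (hf _ (h2 _)).ne' (by positivity), log_div (hf _ (h2 _)).ne' (by positivity),
    log_rpow (h2 _), log_rpow (h2 _), log_zpow, log_zpow]
  push_cast; ring

theorem DyadicRegular.of_tendsto (hf : ∀ ξ, 0 < ξ → 0 < f ξ) (hL : 0 < L)
    (h0 : Tendsto f (𝓝[>] 0) (𝓝 L)) (hinf : Tendsto (fun ξ => f ξ / ξ ^ p) atTop (𝓝 1)) :
    DyadicRegular f where
  pos n := hf _ (zpow_pos two_pos n)
  log_increment_bdd := by
    have hbot := tendsto_log_dyadic_atBot hL h0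
    exact Int.exists_abs_le_of_tendsto (a := log L - log L)
      ((hbot.comp (tendsto_atBot_add_const_right _ 1 tendsto_id)).sub hbot)
      (tendsto_log_dyadic_increment_atTop hf hinf)
  log_bdd_of_le := Int.exists_abs_le_of_tendsto_atBot (tendsto_log_dyadic_atBot hL h0)

theorem summable_inv_dyadic (hp : 0 < p) (hf : ∀ ξ, 0 < ξ → 0 < f ξ)
    (hinf : Tendsto (fun ξ => f ξ / ξ ^ p) atTop (𝓝 1)) :
    Summable fun m : ℕ => (f (2 ^ (m : ℤ)))⁻¹ := by
  have h2 : ∀ m : ℤ, 0 < f (2 ^ m) := fun m => hf _ (zpow_pos two_pos m)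
  refine summable_of_ratio_test_tendsto_lt_one (l := exp (-(p * log 2)))
    (exp_lt_one_iff.2 (neg_neg_of_pos (mul_pos hp (log_pos one_lt_two))))
    (Eventually.of_forall fun m => (inv_pos.2 (h2 m)).ne') ?_
  refine ((continuous_exp.tendsto _).comp
    ((tendsto_log_dyadic_increment_atTop hf hinf).comp
      tendsto_natCast_atTop_atTop).neg).congr fun m => ?_
  simp only [Function.comp, Nat.cast_add, Nat.cast_one, norm_inv, Real.norm_eq_abs,
    abs_of_pos (h2 _), neg_sub]
  rw [exp_sub, exp_log (h2 _), exp_log (h2 _)]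
  field_simp

end Dyadic

section Weights

variable {k γ : ℝ → ℝ} {A : ℝ}

theorem zeta_zero_eq (n : ℤ) :
    zeta k γ 0 n = log 2 * k (2 ^ n) / (2 ^ n * γ (2 ^ (n + 1))) := by
  simp [zeta, ← Real.rpow_intCast]

theorem thetaF_zero_eq (hk : ∀ n : ℤ, 0 < k (2 ^ n)) (hγ : ∀ n : ℤ, 0 < γ (2 ^ n)) (n : ℤ) :
    thetaF k γ 0 n =
      k (2 ^ (n + 1)) / k (2 ^ n) * (γ (2 ^ (n + 1)) / γ (2 ^ (n + 1 + 1))) := by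
  have h2 : (2 : ℝ) ^ (n + 1) = 2 * 2 ^ n := by rw [zpow_add_one₀ two_ne_zero]; ring
  have := hk n; have := hk (n + 1); have := hγ (n + 1); have := hγ (n + 1 + 1)
  rw [thetaF, zeta_zero_eq, zeta_zero_eq, h2]
  field_simp

theorem exists_abs_log_thetaF_le (hk : DyadicRegular k) (hγ : DyadicRegular γ) :
    ∃ L, ∀ n, |log (thetaF k γ 0 n)| ≤ L := by
  obtain ⟨Bk, hkr⟩ := hk.log_increment_bdd
  obtain ⟨Bγ, hγr⟩ := hγ.log_increment_bdd
  refine ⟨Bk + Bγ, fun n => ?_⟩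
  have hk' := hk.pos; have hγ' := hγ.pos
  rw [thetaF_zero_eq hk' hγ', log_mul (div_pos (hk' _) (hk' _)).ne'
    (div_pos (hγ' _) (hγ' _)).ne', log_div (hk' _).ne' (hk' _).ne',
    log_div (hγ' _).ne' (hγ' _).ne']
  have h1 := abs_le.1 (hkr n); have h2 := abs_le.1 (hγr (n + 1))
  rw [abs_le]; constructor <;> linarith

def thetaTail (k γ : ℝ → ℝ) (n : ℤ) : ℝ :=
  (2 : ℝ) ^ n * ∑' m : ℕ, (2 : ℝ) ^ (-(n + 1 + (m : ℤ))) * log (thetaF k γ 0 (n + (m : ℤ)))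

theorem alphaF_zero_eq (A : ℝ) (n : ℤ) :
    alphaF k γ 0 A n = exp (-(A * 2 ^ n) - thetaTail k γ n) := by
  rw [alphaF, thetaTail, sub_eq_add_neg, exp_add]

theorem abs_thetaTail_le {L : ℝ} (hL : ∀ n, |log (thetaF k γ 0 n)| ≤ L) (n : ℤ) :
    |thetaTail k γ n| ≤ L := by
  have hpow : ∀ m : ℕ, (2 : ℝ) ^ n * 2 ^ (-(n + 1 + (m : ℤ))) = (1 / 2) ^ m / 2 := fun m => by
    rw [← zpow_add₀ two_ne_zero, show n + -(n + 1 + (m : ℤ)) = -((m : ℤ) + 1) by ring,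
      zpow_neg, ← Nat.cast_succ, zpow_natCast, pow_succ]
    field_simp
    rw [← mul_pow]; norm_num
  have hgeom : HasSum (fun m : ℕ => (1 / 2 : ℝ) ^ m / 2 * L) L := by
    have := (hasSum_geometric_two.div_const 2).mul_right L
    rwa [div_self two_ne_zero, one_mul] at this
  rw [thetaTail, ← tsum_mul_left, ← Real.norm_eq_abs]
  refine tsum_of_norm_bounded hgeom fun m => ?_
  rw [← mul_assoc, hpow, norm_mul, Real.norm_eq_abs, abs_of_pos (by positivity)]
  exact mul_le_mul_of_nonneg_left (hL _) (by positivity)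

def massWeight (k γ : ℝ → ℝ) (A : ℝ) (n : ℤ) : ℝ := (2 : ℝ) ^ (2 * n) * aF k γ 0 A n

def gradWeight (k γ : ℝ → ℝ) (A : ℝ) (n : ℤ) : ℝ :=
  (2 : ℝ) ^ (2 * n) * γ ((2 : ℝ) ^ (n + 1)) * aF k γ 0 A (n + 1)

theorem massWeight_eq (hk : ∀ n : ℤ, 0 < k (2 ^ n)) (hγ : ∀ n : ℤ, 0 < γ (2 ^ n)) (n : ℤ) :
    massWeight k γ A n = 2 / log 2 * 8 ^ n *
      exp (log (γ (2 ^ (n + 1))) - log (k (2 ^ n)) - A * 2 ^ n - thetaTail k γ n) := by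
  have h8 : (8 : ℝ) ^ n = 2 ^ (2 * n) * 2 ^ n := by
    rw [← zpow_add₀ two_ne_zero, show 2 * n + n = 3 * n by ring, zpow_mul]; norm_num
  have hexp : exp (log (γ (2 ^ (n + 1))) - log (k (2 ^ n)) - A * 2 ^ n - thetaTail k γ n) =
      γ (2 ^ (n + 1)) / k (2 ^ n) * alphaF k γ 0 A n := by
    rw [alphaF_zero_eq, ← exp_log (div_pos (hγ _) (hk n)), ← exp_add,
      log_div (hγ _).ne' (hk n).ne']
    ring_nf
  have := hk n; have := hγ (n + 1); have := log_pos one_lt_two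
  rw [hexp, massWeight, aF, zeta_zero_eq, h8]
  field_simp

theorem gradWeight_eq (n : ℤ) :
    gradWeight k γ A n = γ (2 ^ (n + 1)) / 4 * massWeight k γ A (n + 1) := by
  have h4 : (2 : ℝ) ^ (2 * (n + 1)) = 4 * 2 ^ (2 * n) := by
    rw [mul_add, mul_one, zpow_add₀ two_ne_zero]; norm_num; ring
  rw [gradWeight, massWeight, h4]
  ring

theorem gradWeight_eq_exp (hk : ∀ n : ℤ, 0 < k (2 ^ n)) (hγ : ∀ n : ℤ, 0 < γ (2 ^ n)) (n : ℤ) :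
    gradWeight k γ A n = 4 / log 2 * 8 ^ n * exp (log (γ (2 ^ (n + 1))) +
      log (γ (2 ^ (n + 1 + 1))) - log (k (2 ^ (n + 1))) - A * 2 ^ (n + 1) -
        thetaTail k γ (n + 1)) := by
  rw [gradWeight_eq, massWeight_eq hk hγ, zpow_add_one₀ (by norm_num : (8 : ℝ) ≠ 0),
    show ∀ a b c d e : ℝ, a + b - c - d - e = a + (b - c - d - e) by intros; ring, exp_add,
    exp_log (hγ _)]
  ring

theorem massWeight_pos (hk : ∀ n : ℤ, 0 < k (2 ^ n)) (hγ : ∀ n : ℤ, 0 < γ (2 ^ n)) (n : ℤ) :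
    0 < massWeight k γ A n := by
  rw [massWeight_eq hk hγ]
  have := log_pos one_lt_two
  positivity

theorem gradWeight_pos (hk : ∀ n : ℤ, 0 < k (2 ^ n)) (hγ : ∀ n : ℤ, 0 < γ (2 ^ n)) (n : ℤ) :
    0 < gradWeight k γ A n := by
  rw [gradWeight_eq]
  exact mul_pos (div_pos (hγ _) four_pos) (massWeight_pos hk hγ _)

theorem massWeight_succ_div_gradWeight (hk : ∀ n : ℤ, 0 < k (2 ^ n))
    (hγ : ∀ n : ℤ, 0 < γ (2 ^ n)) (n : ℤ) :
    massWeight k γ A (n + 1) / gradWeight k γ A n = 4 / γ (2 ^ (n + 1)) := by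
  have := massWeight_pos (A := A) hk hγ (n + 1); have := hγ (n + 1)
  rw [gradWeight_eq]
  field_simp

theorem exists_massWeight_le_of_nonpos (hk : DyadicRegular k) (hγ : DyadicRegular γ)
    (hA : 0 ≤ A) : ∃ Cw, ∀ n ≤ 0, massWeight k γ A n ≤ Cw * 8 ^ n := by
  obtain ⟨Bk, hkB⟩ := hk.log_bdd_of_le 0
  obtain ⟨Bγ, hγB⟩ := hγ.log_bdd_of_le 1
  obtain ⟨L, hL⟩ := exists_abs_log_thetaF_le hk hγ
  refine ⟨2 / log 2 * exp (Bγ + Bk + L), fun n hn => ?_⟩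
  have := log_pos one_lt_two
  have h1 := abs_le.1 (hγB (n + 1) (by omega)); have h2 := abs_le.1 (hkB n hn)
  have h3 := abs_le.1 (abs_thetaTail_le hL n)
  have h4 : 0 ≤ A * 2 ^ n := mul_nonneg hA (zpow_pos two_pos n).le
  rw [massWeight_eq hk.pos hγ.pos, mul_right_comm]
  gcongr
  linarith

theorem exists_le_gradWeight_of_nonpos (hk : DyadicRegular k) (hγ : DyadicRegular γ)
    (hA : 0 ≤ A) : ∃ cv > 0, ∀ n ≤ 0, cv * 8 ^ n ≤ gradWeight k γ A n := by
  obtain ⟨Bk, hkB⟩ := hk.log_bdd_of_le 1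
  obtain ⟨Bγ, hγB⟩ := hγ.log_bdd_of_le 2
  obtain ⟨L, hL⟩ := exists_abs_log_thetaF_le hk hγ
  have := log_pos one_lt_two
  refine ⟨4 / log 2 * exp (-(2 * Bγ + Bk + 2 * A + L)), by positivity, fun n hn => ?_⟩
  have h1 := abs_le.1 (hγB (n + 1) (by omega))
  have h2 := abs_le.1 (hγB (n + 1 + 1) (by omega))
  have h3 := abs_le.1 (hkB (n + 1) (by omega))
  have h4 := abs_le.1 (abs_thetaTail_le hL (n + 1))
  have h5 : A * 2 ^ (n + 1) ≤ A * 2 := by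
    gcongr
    calc (2 : ℝ) ^ (n + 1) ≤ 2 ^ (1 : ℤ) := zpow_le_zpow_right₀ one_le_two (by omega)
      _ = 2 := zpow_one 2
  rw [gradWeight_eq_exp hk.pos hγ.pos, mul_right_comm]
  gcongr
  linarith

theorem exists_gradWeight_succ_le (hk : DyadicRegular k) (hγ : DyadicRegular γ) :
    ∃ C, ∀ n, gradWeight k γ A (n + 1) ≤ 8 * exp (C - A * 2 ^ (n + 1)) * gradWeight k γ A n := by
  obtain ⟨Bk, hkr⟩ := hk.log_increment_bdd
  obtain ⟨Bγ, hγr⟩ := hγ.log_increment_bdd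
  obtain ⟨L, hL⟩ := exists_abs_log_thetaF_le hk hγ
  refine ⟨2 * Bγ + Bk + 2 * L, fun n => ?_⟩
  have h1 := abs_le.1 (hγr (n + 1)); have h2 := abs_le.1 (hγr (n + 1 + 1))
  have h3 := abs_le.1 (hkr (n + 1))
  have h4 := abs_le.1 (abs_thetaTail_le hL (n + 1))
  have h5 := abs_le.1 (abs_thetaTail_le hL (n + 1 + 1))
  have h6 : A * 2 ^ (n + 1 + 1) = 2 * (A * 2 ^ (n + 1)) := by
    rw [zpow_add_one₀ two_ne_zero]; ring
  rw [gradWeight_eq_exp hk.pos hγ.pos, gradWeight_eq_exp hk.pos hγ.pos,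
    zpow_add_one₀ (by norm_num : (8 : ℝ) ≠ 0)]
  set a := log (γ (2 ^ (n + 1 + 1))) + log (γ (2 ^ (n + 1 + 1 + 1))) -
    log (k (2 ^ (n + 1 + 1))) - A * 2 ^ (n + 1 + 1) - thetaTail k γ (n + 1 + 1)
  set b := log (γ (2 ^ (n + 1))) + log (γ (2 ^ (n + 1 + 1))) - log (k (2 ^ (n + 1))) -
    A * 2 ^ (n + 1) - thetaTail k γ (n + 1)
  have := log_pos one_lt_two
  have hab : a - b ≤ 2 * Bγ + Bk + 2 * L - A * 2 ^ (n + 1) := by simp only [a, b]; linarith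
  have hexp : exp a = exp (a - b) * exp b := by rw [← exp_add, sub_add_cancel]
  calc 4 / log 2 * (8 ^ n * 8) * exp a = 8 * exp (a - b) * (4 / log 2 * 8 ^ n * exp b) := by
        rw [hexp]; ring
    _ ≤ _ := by gcongr

theorem eventually_gradWeight_succ_le_half (hk : DyadicRegular k) (hγ : DyadicRegular γ)
    (hA : 0 < A) : ∀ᶠ n in atTop, gradWeight k γ A (n + 1) ≤ gradWeight k γ A n / 2 := by
  obtain ⟨C, hC⟩ := exists_gradWeight_succ_le (A := A) hk hγ
  have hlarge : Tendsto (fun n : ℤ => A * 2 ^ (n + 1)) atTop atTop :=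
    (tendsto_two_zpow_atTop.comp (tendsto_atTop_add_const_right _ 1 tendsto_id)).const_mul_atTop hA
  filter_upwards [hlarge.eventually_ge_atTop (C + log 16)] with n hn
  have hexp : exp (C - A * 2 ^ (n + 1)) ≤ 16⁻¹ := by
    rw [← exp_log (by norm_num : (0 : ℝ) < 16), ← exp_neg]
    exact exp_le_exp.2 (by linarith)
  have hV := gradWeight_pos (A := A) hk.pos hγ.pos n
  calc gradWeight k γ A (n + 1) ≤ 8 * exp (C - A * 2 ^ (n + 1)) * gradWeight k γ A n := hC n
    _ ≤ 8 * 16⁻¹ * gradWeight k γ A n := by gcongr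
    _ = gradWeight k γ A n / 2 := by ring

theorem summable_massWeight_mul_sum_inv (hk : DyadicRegular k) (hγ : DyadicRegular γ)
    (hA : 0 < A) (hγs : Summable fun m : ℕ => (γ (2 ^ (m : ℤ)))⁻¹) :
    Summable fun m : ℕ => massWeight k γ A m * ∑ j ∈ range m, (gradWeight k γ A j)⁻¹ := by
  refine summable_mul_sum_inv_of_halving (fun n => (massWeight_pos hk.pos hγ.pos _).le)
    (fun n => gradWeight_pos hk.pos hγ.pos _) ?_ ?_
  · simpa using tendsto_natCast_atTop_atTop.eventually
      (eventually_gradWeight_succ_le_half hk hγ hA)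
  · refine (((summable_nat_add_iff 1).2 hγs).mul_left 4).congr fun m => ?_
    simpa [div_eq_mul_inv] using (massWeight_succ_div_gradWeight (A := A) hk.pos hγ.pos m).symm

end Weights

theorem stmt7_general
    (α β αb βb k₀ γ₀ : ℝ)
    (hβ : β ∈ Set.Ioo (1:ℝ) 2)
    (hαb : 1 < αb) (hβb : 1 < βb) (hk₀ : 0 < k₀) (hγ₀ : 0 < γ₀)
    (k γ : ℝ → ℝ)
    (hk_pos : ∀ ξ : ℝ, 0 ≤ ξ → 0 < k ξ)
    (hk_inf : Tendsto (fun ξ : ℝ => k ξ / ξ ^ (α + 1)) atTop (𝓝 1))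
    (hk_0 : (fun ξ : ℝ => k ξ - k₀) =O[𝓝[>] 0] fun ξ : ℝ => ξ ^ αb)
    (hγ_pos : ∀ ξ : ℝ, 0 < ξ → 0 < γ ξ)
    (hγ_inf : Tendsto (fun ξ : ℝ => γ ξ / ξ ^ β) atTop (𝓝 1))
    (hγ_0 : (fun ξ : ℝ => γ ξ - γ₀) =O[𝓝[>] 0] fun ξ : ℝ => ξ ^ βb)
    (A_M : ℝ) (hAM_pos : 0 < A_M)
    :
    ∃ c₀ > (0:ℝ), ∀ y : ℤ → ℝ,
      Summable (fun n : ℤ => (2:ℝ) ^ (2 * n) * aF k γ 0 A_M n * (y n) ^ 2) →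
      (∑' n : ℤ, ENNReal.ofReal
          ((2:ℝ) ^ (2 * n) * aF k γ 0 A_M n *
            (y n -
              (∑' m : ℤ, (2:ℝ) ^ (2 * m) * aF k γ 0 A_M m * y m) /
                (∑' m : ℤ, (2:ℝ) ^ (2 * m) * aF k γ 0 A_M m)) ^ 2)) ≤
        ENNReal.ofReal c₀ *
          ∑' n : ℤ, ENNReal.ofReal
            ((2:ℝ) ^ (2 * n) * γ ((2:ℝ) ^ (n + 1)) * aF k γ 0 A_M (n + 1) *
              (y (n + 1) - y n) ^ 2) := by
  have hk := DyadicRegular.of_tendsto (fun ξ hξ => hk_pos ξ hξ.le) hk₀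
    (tendsto_nhdsGT_of_isBigO_rpow (by linarith) hk_0) hk_inf
  have hγ := DyadicRegular.of_tendsto hγ_pos hγ₀
    (tendsto_nhdsGT_of_isBigO_rpow (by linarith) hγ_0) hγ_inf
  obtain ⟨Cw, hW_neg⟩ := exists_massWeight_le_of_nonpos hk hγ hAM_pos.le
  obtain ⟨cv, hcv, hV_neg⟩ := exists_le_gradWeight_of_nonpos hk hγ hAM_pos.le
  exact exists_weighted_poincare (massWeight_pos hk.pos hγ.pos) (gradWeight_pos hk.pos hγ.pos)
    (by norm_num : (1 : ℝ) < 8) hcv hW_neg hV_neg <| summable_massWeight_mul_sum_inv hk hγ hAM_pos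
      (summable_inv_dyadic (by linarith [hβ.1]) hγ_pos hγ_inf)

/-- discrete weighted Poincaré inequality.
With `a_n = a_n(A_M)`, there is `c₀ > 0` depending only on `M` (and the kernels) such that for
every sequence `y` with `Σ 2^{2n} a_n y_n² < ∞`, setting `ȳ = (Σ 2^{2n} a_n y_n)/(Σ 2^{2n} a_n)`,
`Σ 2^{2n} a_n (y_n − ȳ)² ≤ c₀ Σ 2^{2n} γ(2^{n+1}) a_{n+1} (y_{n+1} − y_n)²`
(the right-hand side being possibly infinite, both sides are computed in `ℝ≥0∞`). -/
theorem stmt7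
    (α β αb βb k₀ γ₀ : ℝ)
    (hα : α ∈ Set.Ioo (0:ℝ) 1) (hβ : β ∈ Set.Ioo (1:ℝ) 2)
    (hαb : 1 < αb) (hβb : 1 < βb) (hk₀ : 0 < k₀) (hγ₀ : 0 < γ₀)
    (k γ : ℝ → ℝ)
    (hk_cont : ContinuousOn k (Set.Ici 0)) (hk_pos : ∀ ξ : ℝ, 0 ≤ ξ → 0 < k ξ)
    (hk_inf : Tendsto (fun ξ : ℝ => k ξ / ξ ^ (α + 1)) atTop (𝓝 1))
    (hk_0 : (fun ξ : ℝ => k ξ - k₀) =O[𝓝[>] 0] fun ξ : ℝ => ξ ^ αb)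
    (hγ_cont : ContinuousOn γ (Set.Ioi 0)) (hγ_pos : ∀ ξ : ℝ, 0 < ξ → 0 < γ ξ)
    (hγ_inf : Tendsto (fun ξ : ℝ => γ ξ / ξ ^ β) atTop (𝓝 1))
    (hγ_0 : (fun ξ : ℝ => γ ξ - γ₀) =O[𝓝[>] 0] fun ξ : ℝ => ξ ^ βb)
    (M : ℝ) (hM : 0 < M) (A_M : ℝ) (hAM_pos : 0 < A_M)
    (hAM_sum : Summable (fun n : ℤ => (2:ℝ) ^ n * aF k γ 0 A_M n))
    (hAM : (∑' n : ℤ, (2:ℝ) ^ n * aF k γ 0 A_M n) = M)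
    :
    ∃ c₀ > (0:ℝ), ∀ y : ℤ → ℝ,
      Summable (fun n : ℤ => (2:ℝ) ^ (2 * n) * aF k γ 0 A_M n * (y n) ^ 2) →
      (∑' n : ℤ, ENNReal.ofReal
          ((2:ℝ) ^ (2 * n) * aF k γ 0 A_M n *
            (y n -
              (∑' m : ℤ, (2:ℝ) ^ (2 * m) * aF k γ 0 A_M m * y m) /
                (∑' m : ℤ, (2:ℝ) ^ (2 * m) * aF k γ 0 A_M m)) ^ 2)) ≤
        ENNReal.ofReal c₀ *
          ∑' n : ℤ, ENNReal.ofReal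
            ((2:ℝ) ^ (2 * n) * γ ((2:ℝ) ^ (n + 1)) * aF k γ 0 A_M (n + 1) *
              (y (n + 1) - y n) ^ 2) :=
  stmt7_general α β αb βb k₀ γ₀ hβ hαb hβb hk₀ hγ₀ k γ hk_pos hk_inf hk_0 hγ_pos hγ_inf hγ_0 A_M
    hAM_pos
end
end
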